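/- arXiv:2408.17386 — 14 statements merged into one kernel-verified Lean document; each statement's English description precedes it below -/
import Mathlib

section
/- Let r ≥ 1 be an integer. Then the set {d ∈ ℕ : d ∣ r and (2 ∣ r → 2 ∣ d)} is equal to the set {Nat.gcd ((x − y : ZMod r).val) r : x, y units of ZMod r}. Consequently, this set has exactly τ(r) elements when r is odd and exactly τ(r/2) elements when r is even, where τ(n) denotes the number of positive divisors of n. -/
/-!
Every difference of units of `ZMod r` reduces to `1 - 1 = 0` in `ZMod 2` when `r` is even,
which gives one inclusion. Conversely, given `d ∣ r` (even if `r` is), let `a` be the product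
of the primes dividing `r` but not `d`. Then `d + a` and `2 * d + a` are both coprime to `r`:
a prime `p ∣ r` divides exactly one of `d` and `a`, and `p ≠ 2` when `p ∤ d`. Their difference
`d` has `gcd (d % r) r = d`. The counts follow from `d ↦ 2 * d` being a bijection from the
divisors of `r / 2` onto the even divisors of `r`.
-/

open Finset

namespace Nat

theorem prime_dvd_prod_primeFactors_filter_iff {r d p : ℕ} (hp : p.Prime) (hpr : p ∣ r)
    (hr : r ≠ 0) : p ∣ ∏ q ∈ r.primeFactors with ¬ q ∣ d, q ↔ ¬ p ∣ d := by
  rw [(Nat.prime_iff.mp hp).dvd_finsetProd_iff]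
  constructor
  · rintro ⟨q, hq, hpq⟩
    simp only [mem_filter, mem_primeFactors] at hq
    exact (Nat.prime_dvd_prime_iff_eq hp hq.1.1).mp hpq ▸ hq.2
  · intro hpd
    exact ⟨p, by simp [hp, hpr, hr, hpd], dvd_rfl⟩

theorem coprime_mul_add_prod_primeFactors_filter {r c d : ℕ} (hr : r ≠ 0)
    (hc : ∀ p, p.Prime → p ∣ r → p ∣ c → p ∣ d) :
    (c * d + ∏ q ∈ r.primeFactors with ¬ q ∣ d, q).Coprime r := by
  refine Nat.coprime_of_dvd fun p hp hpy hpr => ?_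
  have ha := prime_dvd_prod_primeFactors_filter_iff (d := d) hp hpr hr
  by_cases hpd : p ∣ d
  · exact ha.mp ((Nat.dvd_add_right (hpd.mul_left c)).mp hpy) hpd
  · have hpcd : p ∣ c * d := (Nat.dvd_add_left (ha.mpr hpd)).mp hpy
    exact hpd ((hp.dvd_mul.mp hpcd).elim (hc p hp hpr) id)

theorem exists_coprime_and_add_coprime {r d : ℕ} (hr : r ≠ 0) (h2 : 2 ∣ r → 2 ∣ d) :
    ∃ y, y.Coprime r ∧ (y + d).Coprime r := by
  refine ⟨1 * d + ∏ q ∈ r.primeFactors with ¬ q ∣ d, q,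
    coprime_mul_add_prod_primeFactors_filter hr fun p hp _ hp1 => absurd hp1 hp.not_dvd_one, ?_⟩
  have h2d := coprime_mul_add_prod_primeFactors_filter (c := 2) (d := d) hr fun p hp hpr hp2 => by
    obtain rfl := (Nat.prime_dvd_prime_iff_eq hp prime_two).mp hp2
    exact h2 hpr
  convert h2d using 1
  ring

theorem setOf_dvd_mul_and_dvd {k m : ℕ} (hk : k ≠ 0) (hm : m ≠ 0) :
    {d : ℕ | d ∣ k * m ∧ k ∣ d} = (k * ·) '' m.divisors := by
  ext d
  simp only [Set.mem_ofPred_eq, Set.mem_image, mem_coe, mem_divisors]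
  constructor
  · rintro ⟨hdkm, e, rfl⟩
    exact ⟨e, ⟨(Nat.mul_dvd_mul_iff_left (Nat.pos_of_ne_zero hk)).mp hdkm, hm⟩, rfl⟩
  · rintro ⟨e, ⟨hem, -⟩, rfl⟩
    exact ⟨Nat.mul_dvd_mul_left k hem, dvd_mul_right k e⟩

theorem ncard_setOf_dvd_mul_and_dvd {k m : ℕ} (hk : k ≠ 0) (hm : m ≠ 0) :
    {d : ℕ | d ∣ k * m ∧ k ∣ d}.ncard = m.divisors.card := by
  rw [setOf_dvd_mul_and_dvd hk hm, Set.ncard_image_of_injective _ (mul_right_injective₀ hk),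
    Set.ncard_coe_finset]

end Nat

namespace ZMod

theorem two_dvd_val_sub_of_isUnit {r : ℕ} [NeZero r] (h2 : 2 ∣ r) {x y : ZMod r}
    (hx : IsUnit x) (hy : IsUnit y) : 2 ∣ (x - y).val := by
  rw [← natCast_eq_zero_iff, natCast_val, ← castHom_apply (h := h2), map_sub]
  have hone : ∀ w : ZMod 2, IsUnit w → w = 1 := by decide
  rw [hone _ (hx.map _), hone _ (hy.map _), sub_self]

theorem exists_units_sub_eq_natCast {r d : ℕ} (hr : r ≠ 0) (h2 : 2 ∣ r → 2 ∣ d) :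
    ∃ x y : (ZMod r)ˣ, (x : ZMod r) - y = d := by
  obtain ⟨y, hy, hyd⟩ := Nat.exists_coprime_and_add_coprime hr h2
  exact ⟨unitOfCoprime _ hyd, unitOfCoprime _ hy, by simp⟩

theorem gcd_val_natCast_of_dvd {r d : ℕ} (hd : d ∣ r) : Nat.gcd (d : ZMod r).val r = d := by
  rw [val_natCast, ← Nat.gcd_rec, Nat.gcd_eq_right hd]

end ZMod

theorem stmt_0 (r : ℕ) (hr : 1 ≤ r) :
    ({d : ℕ | d ∣ r ∧ (2 ∣ r → 2 ∣ d)} =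
      {g : ℕ | ∃ x y : (ZMod r)ˣ, g = Nat.gcd (((x : ZMod r) - (y : ZMod r)).val) r}) ∧
    (Odd r → {d : ℕ | d ∣ r ∧ (2 ∣ r → 2 ∣ d)}.ncard = r.divisors.card) ∧
    (Even r → {d : ℕ | d ∣ r ∧ (2 ∣ r → 2 ∣ d)}.ncard = (r / 2).divisors.card) := by
  have hr0 : r ≠ 0 := by omega
  have : NeZero r := ⟨hr0⟩
  refine ⟨Set.ext fun g => ⟨?_, ?_⟩, fun hodd => ?_, fun heven => ?_⟩
  · rintro ⟨hg, h2⟩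
    obtain ⟨x, y, hxy⟩ := ZMod.exists_units_sub_eq_natCast hr0 h2
    exact ⟨x, y, by rw [hxy, ZMod.gcd_val_natCast_of_dvd hg]⟩
  · rintro ⟨x, y, rfl⟩
    exact ⟨Nat.gcd_dvd_right _ _, fun h2 =>
      Nat.dvd_gcd (ZMod.two_dvd_val_sub_of_isUnit h2 x.isUnit y.isUnit) h2⟩
  · simpa [hodd.not_two_dvd_nat] using Nat.ncard_setOf_dvd_mul_and_dvd one_ne_zero hr0
  · obtain ⟨m, rfl⟩ := heven.two_dvd
    simp only [dvd_mul_right, true_imp_iff]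
    rw [Nat.mul_div_cancel_left m two_pos, Nat.ncard_setOf_dvd_mul_and_dvd two_ne_zero (by omega)]
end

section
/- Let r ≥ 2 and k ≥ 1 be integers. Consider the map sending a tuple (m₁,…,m_{k+1}) of units of ZMod r to the k-tuple (Nat.gcd ((m_{i+1} − m_i : ZMod r).val) r)_{i=1,…,k} ∈ ℕ^k. The image of this map has cardinality τ(r)^k when r is odd and τ(r/2)^k when r is even, where τ(n) denotes the number of positive divisors of n. (This image counts the number of different ideal lattices of the gauge-fixed quantum lens spaces C(L_q^{2k+1}(r;m)) among all choices of weights m.) -/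
/-!
Since `m_{i+1} - m_i = m_i (m_i⁻¹ m_{i+1} - 1)` and multiplying by a unit does not change the gcd
with `r`, the `i`-th entry only depends on the quotient `m_i⁻¹ m_{i+1}`, and these quotients range
independently over all units. So the image is the `k`-th power of the set of values
`gcd (w - 1, r)` for units `w`. These are exactly the divisors `d` of `r` that are even when `r` is
(units are then odd): `w = 1 + d s` realises `d` as soon as `s` and `1 + d s` are coprime to
`r / d`, and such an `s` exists prime by prime and then by the Chinese remainder theorem, the only
obstruction being the prime `2` when it does not divide `d`.
-/

open Finset

theorem Nat.exists_coprime_and_one_add_mul_coprime (d : ℕ) {e : ℕ} (he : e ≠ 0)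
    (h2 : 2 ∣ e → 2 ∣ d) : ∃ s, s.Coprime e ∧ (1 + d * s).Coprime e := by
  induction e using Nat.recOnPosPrimePosCoprime with
  | zero => exact absurd rfl he
  | one => exact ⟨1, Nat.coprime_one_right _, Nat.coprime_one_right _⟩
  | prime_pow p n hp hn =>
    suffices ∃ s, ¬p ∣ s ∧ ¬p ∣ 1 + d * s by
      obtain ⟨s, hs, hs'⟩ := this
      exact ⟨s, (hp.coprime_iff_not_dvd.2 hs).symm.pow_right n,
        (hp.coprime_iff_not_dvd.2 hs').symm.pow_right n⟩
    by_cases hpd : p ∣ d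
    · exact ⟨1, hp.not_dvd_one, fun h => hp.not_dvd_one ((Nat.dvd_add_left (hpd.mul_right 1)).1 h)⟩
    have hp2 : p ≠ 2 := by
      rintro rfl
      exact hpd (h2 (dvd_pow_self 2 hn.ne'))
    by_cases h1 : p ∣ 1 + d
    · refine ⟨2, fun h => hp2 ((Nat.prime_dvd_prime_iff_eq hp Nat.prime_two).1 h), fun h => hpd ?_⟩
      rw [show 1 + d * 2 = (1 + d) + d by ring] at h
      exact (Nat.dvd_add_right h1).1 h
    · exact ⟨1, hp.not_dvd_one, by simpa using h1⟩
  | coprime a b ha hb hab iha ihb =>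
    obtain ⟨s₁, hs₁, hs₁'⟩ := iha (by omega) fun h => h2 (h.mul_right b)
    obtain ⟨s₂, hs₂, hs₂'⟩ := ihb (by omega) fun h => h2 (h.mul_left a)
    obtain ⟨s, hsa, hsb⟩ := Nat.chineseRemainder hab s₁ s₂
    have hmod : ∀ {m t}, s ≡ t [MOD m] → t.Coprime m → (1 + d * t).Coprime m →
        s.Coprime m ∧ (1 + d * s).Coprime m := fun hst ht ht' =>
      ⟨(hst.gcd_eq).trans ht, (((Nat.ModEq.refl 1).add (hst.mul_left d)).gcd_eq).trans ht'⟩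
    obtain ⟨hsa₁, hsa₂⟩ := hmod hsa hs₁ hs₁'
    obtain ⟨hsb₁, hsb₂⟩ := hmod hsb hs₂ hs₂'
    exact ⟨s, hsa₁.mul_right hsb₁, hsa₂.mul_right hsb₂⟩

theorem Nat.card_divisors_filter_dvd {m n : ℕ} (h : m ∣ n) :
    #{d ∈ n.divisors | m ∣ d} = #(n / m).divisors := by
  rcases eq_or_ne m 0 with rfl | hm
  · simp [zero_dvd_iff.1 h]
  rcases eq_or_ne n 0 with rfl | hn
  · simp
  have hnm : n / m ≠ 0 := (Nat.div_ne_zero_iff_of_dvd h).2 ⟨hn, hm⟩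
  symm
  refine card_bij (fun e _ => m * e) ?_
    (fun _ _ _ _ he => Nat.eq_of_mul_eq_mul_left (pos_of_ne_zero hm) he) ?_
  · intro e he
    rw [mem_divisors] at he
    simpa [hn] using (Nat.dvd_div_iff_mul_dvd h).1 he.1
  · intro d hd
    obtain ⟨⟨hdn, -⟩, e, rfl⟩ : (d ∣ n ∧ n ≠ 0) ∧ m ∣ d := by simpa using hd
    exact ⟨e, by simpa [hnm] using (Nat.dvd_div_iff_mul_dvd h).2 hdn, rfl⟩

theorem Fin.surjective_inv_mul_succ {G : Type*} [Group G] (k : ℕ) :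
    Function.Surjective fun (m : Fin (k + 1) → G) (i : Fin k) => (m i.castSucc)⁻¹ * m i.succ :=
  fun f => ⟨partialProd f, funext (partialProd_right_inv f)⟩

theorem Fin.range_comp_inv_mul_succ {G α : Type*} [Group G] (k : ℕ) (g : G → α) :
    Set.range (fun (m : Fin (k + 1) → G) (i : Fin k) => g ((m i.castSucc)⁻¹ * m i.succ)) =
      Set.univ.pi fun _ => Set.range g :=
  ((surjective_inv_mul_succ k).range_comp (Pi.map fun _ => g)).trans (Set.range_piMap _)

namespace ZMod

variable {r : ℕ}

theorem gcd_val_unit_mul [NeZero r] (u : (ZMod r)ˣ) (x : ZMod r) :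
    Nat.gcd (↑u * x).val r = Nat.gcd x.val r := by
  rw [val_mul, (Nat.mod_modEq _ r).gcd_eq]
  exact Nat.Coprime.gcd_mul_left_cancel _ (val_coe_unit_coprime u)

theorem gcd_val_sub_units [NeZero r] (u v : (ZMod r)ˣ) :
    Nat.gcd (↑v - ↑u : ZMod r).val r = Nat.gcd (↑(u⁻¹ * v) - 1 : ZMod r).val r := by
  have : (↑v - ↑u : ZMod r) = u * (↑(u⁻¹ * v) - 1) := by
    rw [Units.val_mul, mul_sub, ← mul_assoc, Units.mul_inv, one_mul, mul_one]
  rw [this, gcd_val_unit_mul]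

theorem two_dvd_val_unit_sub_one [NeZero r] (h2 : 2 ∣ r) (w : (ZMod r)ˣ) :
    2 ∣ (↑w - 1 : ZMod r).val := by
  have hw : castHom h2 (ZMod 2) w = 1 := by
    have hu := w.isUnit.map (castHom h2 (ZMod 2))
    generalize castHom h2 (ZMod 2) w = x at hu ⊢
    revert x
    decide
  rw [← natCast_eq_zero_iff, natCast_val, ← castHom_apply (h := h2), map_sub, map_one, hw, sub_self]

theorem exists_unit_gcd_val_sub_one_eq {d : ℕ} (hr : r ≠ 0) (hd : d ∣ r) (h2 : 2 ∣ r → 2 ∣ d) :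
    ∃ w : (ZMod r)ˣ, Nat.gcd (↑w - 1 : ZMod r).val r = d := by
  have : NeZero r := ⟨hr⟩
  obtain ⟨e, rfl⟩ := hd
  obtain ⟨s, hs, hs'⟩ := Nat.exists_coprime_and_one_add_mul_coprime d (right_ne_zero_of_mul hr)
    fun he => h2 (he.mul_left d)
  have hcop : (1 + d * s).Coprime (d * e) :=
    ((Nat.coprime_add_mul_left_left 1 d s).2 (Nat.coprime_one_left d)).mul_right hs'
  refine ⟨unitOfCoprime _ hcop, ?_⟩
  rw [coe_unitOfCoprime, Nat.cast_add, Nat.cast_one, add_sub_cancel_left, val_natCast,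
    (Nat.mod_modEq _ _).gcd_eq, Nat.gcd_mul_left, hs, mul_one]

theorem range_gcd_val_unit_sub_one (hr : r ≠ 0) :
    Set.range (fun w : (ZMod r)ˣ => Nat.gcd (↑w - 1 : ZMod r).val r) =
      ↑{d ∈ r.divisors | 2 ∣ r → 2 ∣ d} := by
  have : NeZero r := ⟨hr⟩
  ext d
  simp only [Set.mem_range, coe_filter, Nat.mem_divisors]
  constructor
  · rintro ⟨w, rfl⟩
    exact ⟨⟨Nat.gcd_dvd_right _ _, hr⟩, fun h2 => Nat.dvd_gcd (two_dvd_val_unit_sub_one h2 w) h2⟩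
  · rintro ⟨⟨hd, -⟩, h2⟩
    exact exists_unit_gcd_val_sub_one_eq hr hd h2

end ZMod

theorem stmt_1_general (r k : ℕ) (hr : 2 ≤ r) :
    (Odd r → (Set.range (fun (m : Fin (k + 1) → (ZMod r)ˣ) (i : Fin k) =>
        Nat.gcd (((m i.succ : ZMod r) - (m i.castSucc : ZMod r)).val) r)).ncard
        = r.divisors.card ^ k) ∧
    (Even r → (Set.range (fun (m : Fin (k + 1) → (ZMod r)ˣ) (i : Fin k) =>
        Nat.gcd (((m i.succ : ZMod r) - (m i.castSucc : ZMod r)).val) r)).ncard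
        = (r / 2).divisors.card ^ k) := by
  have hr0 : r ≠ 0 := by omega
  have : NeZero r := ⟨hr0⟩
  have hcard : (Set.range (fun (m : Fin (k + 1) → (ZMod r)ˣ) (i : Fin k) =>
      Nat.gcd (((m i.succ : ZMod r) - (m i.castSucc : ZMod r)).val) r)).ncard =
      #{d ∈ r.divisors | 2 ∣ r → 2 ∣ d} ^ k := by
    simp_rw [ZMod.gcd_val_sub_units]
    rw [Fin.range_comp_inv_mul_succ k fun w : (ZMod r)ˣ => Nat.gcd (↑w - 1 : ZMod r).val r,
      ZMod.range_gcd_val_unit_sub_one hr0, ← Fintype.coe_piFinset, Set.ncard_coe_finset,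
      Fintype.card_piFinset, prod_const, card_univ, Fintype.card_fin]
  refine ⟨fun hodd => ?_, fun heven => ?_⟩
  · simp [hcard, hodd.not_two_dvd_nat]
  · have h2 := even_iff_two_dvd.1 heven
    simp [hcard, h2, Nat.card_divisors_filter_dvd h2]

theorem stmt_1 (r k : ℕ) (hr : 2 ≤ r) (hk : 1 ≤ k) :
    (Odd r → (Set.range (fun (m : Fin (k + 1) → (ZMod r)ˣ) (i : Fin k) =>
        Nat.gcd (((m i.succ : ZMod r) - (m i.castSucc : ZMod r)).val) r)).ncard
        = r.divisors.card ^ k) ∧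
    (Even r → (Set.range (fun (m : Fin (k + 1) → (ZMod r)ˣ) (i : Fin k) =>
        Nat.gcd (((m i.succ : ZMod r) - (m i.castSucc : ZMod r)).val) r)).ncard
        = (r / 2).divisors.card ^ k) :=
  stmt_1_general r k hr
end

section
/- Fix integers r ≥ 1 and k ≥ 0 and a weight vector m : Fin (k+1) → ZMod r all of whose values are units. Suppose (i,j) ⪰_m (i',j') and (i,j) ≠ (i',j'). Then i < i' and, with ℓ := i' − i, there exist j₀, j₁, …, j_ℓ ∈ ZMod r with j₀ = j, j_ℓ = j', and (i + t, j_t) ≻_m (i + t + 1, j_{t+1}) for every t with 0 ≤ t < ℓ; that is, the chain from (i,j) to (i',j') can be refined to pass through each intermediate level exactly once. -/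
/-- The relation `(i,j) ≻_m (i',j')` on `Fin (k+1) × ZMod r`: it holds iff `i < i'`
and there exists `n ∈ ZMod r` with `n·(m i − m i') = j − j'`. -/
def succRel (r k : ℕ) (m : Fin (k + 1) → ZMod r) :
    Fin (k + 1) × ZMod r → Fin (k + 1) × ZMod r → Prop :=
  fun p q => p.1 < q.1 ∧ ∃ n : ZMod r, n * (m p.1 - m q.1) = p.2 - q.2


def Chain (r k : ℕ) (m : Fin (k + 1) → ZMod r) (p q : Fin (k + 1) × ZMod r) : Prop :=
  (p.1 : ℕ) < q.1 ∧ ∃ c : ℕ → ZMod r, c 0 = p.2 ∧ c ((q.1 : ℕ) - (p.1 : ℕ)) = q.2 ∧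
    ∀ t : ℕ, t < (q.1 : ℕ) - (p.1 : ℕ) →
      ∀ (h1 : (p.1 : ℕ) + t < k + 1) (h2 : (p.1 : ℕ) + t + 1 < k + 1),
      succRel r k m (⟨(p.1 : ℕ) + t, h1⟩, c t) (⟨(p.1 : ℕ) + t + 1, h2⟩, c (t + 1))

lemma step_chain (r k : ℕ) (m : Fin (k + 1) → ZMod r)
    (p q : Fin (k + 1) × ZMod r) (h : succRel r k m p q) : Chain r k m p q := by
  obtain ⟨hlt, n, hn⟩ := h
  have hlt' : (p.1 : ℕ) < (q.1 : ℕ) := hlt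
  set M : ℕ → ZMod r := fun s => m ⟨min s k, by omega⟩ with hM
  have hMeq : ∀ (s : ℕ) (hs : s < k + 1), M s = m ⟨s, hs⟩ := by
    intro s hs
    exact congrArg m (Fin.ext (by simp [hM]; omega))
  refine ⟨hlt', fun t => p.2 - n * (M (p.1 : ℕ) - M ((p.1 : ℕ) + t)), ?_, ?_, ?_⟩
  · simp
  · have e1 : (p.1 : ℕ) + ((q.1 : ℕ) - (p.1 : ℕ)) = (q.1 : ℕ) := by omega
    simp only []
    rw [e1, hMeq _ p.1.isLt, hMeq _ q.1.isLt]
    simp only [Fin.eta]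
    rw [hn]; ring
  · intro t ht h1 h2
    refine ⟨by simp [Fin.lt_def], n, ?_⟩
    show n * _ = (p.2 - n * (M (p.1:ℕ) - M ((p.1:ℕ) + t))) - (p.2 - n * (M (p.1:ℕ) - M ((p.1:ℕ) + (t+1))))
    rw [← hMeq _ h1, ← hMeq _ h2]
    ring

lemma chain_trans (r k : ℕ) (m : Fin (k + 1) → ZMod r)
    (p b q : Fin (k + 1) × ZMod r) (h1 : Chain r k m p b) (h2 : Chain r k m b q) :
    Chain r k m p q := by
  obtain ⟨hlt1, c1, hc10, hc1e, hc1s⟩ := h1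
  obtain ⟨hlt2, c2, hc20, hc2e, hc2s⟩ := h2
  set L1 := (b.1 : ℕ) - (p.1 : ℕ) with hL1
  refine ⟨by omega, fun t => if t ≤ L1 then c1 t else c2 (t - L1), ?_, ?_, ?_⟩
  · simp [hc10]
  · show (if (q.1 : ℕ) - (p.1 : ℕ) ≤ L1 then c1 ((q.1 : ℕ) - (p.1 : ℕ)) else c2 ((q.1 : ℕ) - (p.1 : ℕ) - L1)) = q.2
    rw [if_neg (by omega : ¬ ((q.1 : ℕ) - (p.1 : ℕ) ≤ L1))]
    have e : (q.1 : ℕ) - (p.1 : ℕ) - L1 = (q.1 : ℕ) - (b.1 : ℕ) := by omega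
    rw [e, hc2e]
  · intro t ht g1 g2
    beta_reduce
    rcases lt_trichotomy t L1 with h | h | h
    · rw [if_pos (by omega), if_pos (by omega)]
      exact hc1s t (by omega) g1 g2
    · subst h
      rw [if_pos le_rfl, if_neg (by omega)]
      have e0 : L1 + 1 - L1 = 1 := by omega
      rw [e0, hc1e, ← hc20]
      have := hc2s 0 (by omega) (by omega) (by omega)
      have ef1 : (⟨(b.1 : ℕ) + 0, by omega⟩ : Fin (k + 1)) = ⟨(p.1 : ℕ) + L1, g1⟩ :=
        Fin.ext (by simp; omega)
      have ef2 : (⟨(b.1 : ℕ) + 0 + 1, by omega⟩ : Fin (k + 1)) = ⟨(p.1 : ℕ) + L1 + 1, g2⟩ :=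
        Fin.ext (by simp; omega)
      rw [ef1, ef2] at this
      simpa using this
    · rw [if_neg (by omega), if_neg (by omega)]
      have e1 : t + 1 - L1 = (t - L1) + 1 := by omega
      rw [e1]
      have := hc2s (t - L1) (by omega) (by omega) (by omega)
      have ef1 : (⟨(b.1 : ℕ) + (t - L1), by omega⟩ : Fin (k + 1)) = ⟨(p.1 : ℕ) + t, g1⟩ :=
        Fin.ext (by simp; omega)
      have ef2 : (⟨(b.1 : ℕ) + (t - L1) + 1, by omega⟩ : Fin (k + 1)) = ⟨(p.1 : ℕ) + t + 1, g2⟩ :=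
        Fin.ext (by simp; omega)
      rw [ef1, ef2] at this
      exact this


theorem stmt_4 (r k : ℕ) (hr : 1 ≤ r) (m : Fin (k + 1) → ZMod r)
    (hm : ∀ i, IsUnit (m i)) (i i' : Fin (k + 1)) (j j' : ZMod r)
    (h : Relation.ReflTransGen (succRel r k m) (i, j) (i', j'))
    (hne : (i, j) ≠ (i', j')) :
    i < i' ∧ ∃ c : ℕ → ZMod r, c 0 = j ∧ c ((i' : ℕ) - (i : ℕ)) = j' ∧
      ∀ t : ℕ, ∀ ht : t < (i' : ℕ) - (i : ℕ),
        succRel r k m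
          ((⟨(i : ℕ) + t, by have h1 := i'.isLt; omega⟩ : Fin (k + 1)), c t)
          ((⟨(i : ℕ) + t + 1, by have h1 := i'.isLt; omega⟩ : Fin (k + 1)), c (t + 1)) := by
  have key : ∀ p q : Fin (k + 1) × ZMod r, Relation.ReflTransGen (succRel r k m) p q →
      p = q ∨ Chain r k m p q := by
    intro p q hpq
    induction hpq with
    | refl => exact Or.inl rfl
    | tail hab hbc ih =>
      right
      rcases ih with rfl | ih
      · exact step_chain r k m _ _ hbc
      · exact chain_trans r k m _ _ _ ih (step_chain r k m _ _ hbc)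
  rcases key (i, j) (i', j') h with he | ⟨hlt, c, h0, he, hs⟩
  · exact absurd he hne
  · exact ⟨hlt, c, h0, he, fun t ht => hs t ht _ _⟩
end

section
/- Fix integers r ≥ 1 and k ≥ 0 and two weight vectors m, n : Fin (k+1) → ZMod r all of whose values are units. Then the relations ⪰_m and ⪰_n on Fin (k+1) × ZMod r are equal if and only if for every i = 1, …, k one has Nat.gcd ((m_{i+1} − m_i : ZMod r).val) r = Nat.gcd ((n_{i+1} − n_i : ZMod r).val) r. -/
/-!
A step `(i, x) ≻_m (i', y)` moves `x` by a multiple of `m i - m i'`, which telescopes into the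
consecutive differences `m (a + 1) - m a`; so `⪰_m` is already generated by steps between adjacent
levels, and these are governed by the principal ideals `(m (a + 1) - m a)` of `ZMod r`. Conversely,
`⪰_m` between two adjacent levels is a single step, so it recovers these ideals. Finally, in
`ZMod r` the ideal `(x)` is generated by `gcd (x.val, r)`, a divisor of `r`, so two principal
ideals coincide iff the corresponding gcds do.
-/

namespace ZMod

variable {r : ℕ}

theorem natCast_dvd_natCast_iff_of_dvd {a b : ℕ} (hb : b ∣ r) :
    (b : ZMod r) ∣ (a : ZMod r) ↔ b ∣ a := by
  refine ⟨fun h => ?_, Nat.cast_dvd_cast⟩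
  have h' := map_dvd (ZMod.castHom hb (ZMod b)) h
  rwa [map_natCast, map_natCast, ZMod.natCast_self, zero_dvd_iff,
    ZMod.natCast_eq_zero_iff] at h'

theorem span_singleton_eq_span_gcd_val (x : ZMod r) :
    Ideal.span {x} = Ideal.span {((x.val.gcd r : ℕ) : ZMod r)} := by
  refine le_antisymm ?_ ?_ <;> rw [Ideal.span_singleton_le_span_singleton]
  · rcases r with _ | r
    · -- `ZMod 0 = ℤ`, where `val` is `Int.natAbs`
      rw [Nat.gcd_zero_right]
      exact Int.natAbs_dvd.mpr (dvd_refl x)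
    · conv_rhs => rw [← ZMod.natCast_zmod_val x]
      exact Nat.cast_dvd_cast (Nat.gcd_dvd_left _ _)
  · exact ⟨x⁻¹, (ZMod.mul_inv_eq_gcd x).symm⟩

theorem span_singleton_eq_iff_gcd_val_eq {x y : ZMod r} :
    Ideal.span {x} = Ideal.span {y} ↔ x.val.gcd r = y.val.gcd r := by
  rw [span_singleton_eq_span_gcd_val x, span_singleton_eq_span_gcd_val y]
  refine ⟨fun h => Nat.dvd_antisymm ?_ ?_, fun h => by rw [h]⟩ <;>
    rw [← natCast_dvd_natCast_iff_of_dvd (Nat.gcd_dvd_right _ _),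
      ← Ideal.span_singleton_le_span_singleton, h]

end ZMod

open Relation

theorem Relation.ReflTransGen.eq_or_lt {α β : Type*} [Preorder β] {R : α → α → Prop}
    {f : α → β} (hf : ∀ a b, R a b → f a < f b) {a b : α} (h : ReflTransGen R a b) :
    a = b ∨ f a < f b := by
  induction h with
  | refl => exact Or.inl rfl
  | tail _ hbc ih => exact Or.inr (ih.elim (· ▸ hf _ _ hbc) (·.trans (hf _ _ hbc)))

theorem Fin.reflTransGen_of_rel_castSucc_succ {α : Type*} {R : α → α → Prop} {k : ℕ}
    (f : Fin (k + 1) → α) (h : ∀ i : Fin k, R (f i.castSucc) (f i.succ)) {i j : Fin (k + 1)}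
    (hij : i ≤ j) : ReflTransGen R (f i) (f j) := by
  refine (reflTransGen_of_succ_of_le (fun a b => R (f a) (f b)) (fun a ha => ?_) hij).lift f
    fun _ _ => id
  obtain ⟨b, rfl⟩ := Fin.eq_castSucc_of_ne_last (ha.2.trans_le (Fin.le_last j)).ne
  simpa using h b

def adjRel (r k : ℕ) (m : Fin (k + 1) → ZMod r) :
    Fin (k + 1) × ZMod r → Fin (k + 1) × ZMod r → Prop :=
  fun p q => ∃ i : Fin k, p.1 = i.castSucc ∧ q.1 = i.succ ∧
    p.2 - q.2 ∈ Ideal.span {m i.succ - m i.castSucc}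

section succRel

variable {r k : ℕ} {m : Fin (k + 1) → ZMod r}

theorem succRel_iff {p q : Fin (k + 1) × ZMod r} :
    succRel r k m p q ↔ p.1 < q.1 ∧ p.2 - q.2 ∈ Ideal.span {m q.1 - m p.1} := by
  rw [← neg_sub, Ideal.span_singleton_neg, Ideal.mem_span_singleton']
  rfl

theorem adjRel_le_succRel : adjRel r k m ≤ succRel r k m := by
  rintro p q ⟨i, hp, hq, hmem⟩
  rw [succRel_iff, hp, hq]
  exact ⟨Fin.castSucc_lt_succ, hmem⟩

theorem reflTransGen_adjRel_of_succRel {p q : Fin (k + 1) × ZMod r} (h : succRel r k m p q) :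
    ReflTransGen (adjRel r k m) p q := by
  obtain ⟨hlt, c, hc⟩ := h
  let f : Fin (k + 1) → Fin (k + 1) × ZMod r := fun j => (j, q.2 + c * (m j - m q.1))
  have hpath : ReflTransGen (adjRel r k m) (f p.1) (f q.1) :=
    Fin.reflTransGen_of_rel_castSucc_succ f
      (fun i => ⟨i, rfl, rfl, Ideal.mem_span_singleton'.2 ⟨-c, by ring⟩⟩) hlt.le
  have hp : f p.1 = p := Prod.ext rfl (by simp only [f]; rw [hc]; ring)
  have hq : f q.1 = q := Prod.ext rfl (by simp [f])
  rwa [hp, hq] at hpath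

theorem reflTransGen_succRel_eq_adjRel :
    ReflTransGen (succRel r k m) = ReflTransGen (adjRel r k m) :=
  le_antisymm (reflTransGen_closed fun _ _ => reflTransGen_adjRel_of_succRel)
    (ReflTransGen.mono adjRel_le_succRel)

theorem reflTransGen_succRel_castSucc_succ_iff (i : Fin k) (x y : ZMod r) :
    ReflTransGen (succRel r k m) (i.castSucc, x) (i.succ, y) ↔
      x - y ∈ Ideal.span {m i.succ - m i.castSucc} := by
  refine ⟨fun h => ?_, fun h => .single (succRel_iff.2 ⟨Fin.castSucc_lt_succ, h⟩)⟩
  obtain heq | ⟨b, hpb, hbq⟩ := h.cases_head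
  · exact absurd (congrArg Prod.fst heq) Fin.castSucc_lt_succ.ne
  obtain rfl | hbq := hbq.eq_or_lt (f := Prod.fst) fun _ _ h => h.1
  · exact (succRel_iff.1 hpb).2
  · exact absurd (Fin.castSucc_lt_iff_succ_le.1 hpb.1) (not_le.2 hbq)

end succRel

theorem stmt_5_general (r k : ℕ) (m n : Fin (k + 1) → ZMod r) :
    Relation.ReflTransGen (succRel r k m) = Relation.ReflTransGen (succRel r k n) ↔
      ∀ i : Fin k,
        Nat.gcd ((m i.succ - m i.castSucc).val) r
          = Nat.gcd ((n i.succ - n i.castSucc).val) r := by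
  simp only [← ZMod.span_singleton_eq_iff_gcd_val_eq]
  refine ⟨fun h i => ?_, fun h => ?_⟩
  · ext x
    simpa [reflTransGen_succRel_castSucc_succ_iff] using
      congrFun₂ h (i.castSucc, x) (i.succ, 0)
  · have hadj : adjRel r k m = adjRel r k n := by
      funext p q
      simp only [adjRel, h]
    rw [reflTransGen_succRel_eq_adjRel, reflTransGen_succRel_eq_adjRel, hadj]

theorem stmt_5 (r k : ℕ) (hr : 1 ≤ r) (m n : Fin (k + 1) → ZMod r)
    (hm : ∀ i, IsUnit (m i)) (hn : ∀ i, IsUnit (n i)) :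
    Relation.ReflTransGen (succRel r k m) = Relation.ReflTransGen (succRel r k n) ↔
      ∀ i : Fin k,
        Nat.gcd ((m i.succ - m i.castSucc).val) r
          = Nat.gcd ((n i.succ - n i.castSucc).val) r :=
  stmt_5_general r k m n
end

section
/- Let r ≥ 1 be an integer and let m₁, m₂ be integers coprime to r. Set g := Int.gcd (m₂ − m₁) r. Then the set { ((t₁ + t₂ + 1 : ℕ) : ZMod r) : t₁, t₂ ∈ {0,…,r−1} and r ∣ m₁·(t₁+1) + m₂·t₂ } is equal to the set { ((g·k : ℕ) : ZMod r) : k = 1, 2, …, r/g }. -/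
/-!
With `s = t₁ + 1` and `t = t₂` the pair `(s, t)` runs over all of `(ZMod r)²`, so the left-hand
side is `{s + t | m₁ s + m₂ t = 0}`. As `m₁` is a unit, these sums are exactly the multiples of
`m₂ - m₁` (take `s = m₂ y`, `t = -m₁ y`), and by Bézout `m₂ - m₁` and `g` have the same multiples
in `ZMod r`; finally the multiples of `g ∣ r` are the residues `g k` with `1 ≤ k ≤ r / g`.
-/

theorem Nat.exists_modEq_of_pos {d : ℕ} (hd : 0 < d) (n : ℕ) :
    ∃ k, 1 ≤ k ∧ k ≤ d ∧ k ≡ n [MOD d] := by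
  rcases (n % d).eq_zero_or_pos with h | h
  · exact ⟨d, hd, le_rfl, by simp [Nat.ModEq, h]⟩
  · exact ⟨n % d, h, (Nat.mod_lt n hd).le, Nat.mod_modEq n d⟩

theorem exists_add_eq_iff_sub_dvd {R : Type*} [CommRing R] {a b : R} (ha : IsUnit a) (x : R) :
    (∃ s t, a * s + b * t = 0 ∧ x = s + t) ↔ b - a ∣ x := by
  constructor
  · rintro ⟨s, t, hst, rfl⟩
    obtain ⟨a', ha'⟩ := ha.exists_left_inv
    exact ⟨-(a' * t), by linear_combination a' * hst - (s + t) * ha'⟩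
  · rintro ⟨y, rfl⟩
    exact ⟨b * y, -(a * y), by ring, by ring⟩

namespace ZMod

theorem exists_natCast_eq_of_pos {r : ℕ} (hr : 0 < r) (x : ZMod r) :
    ∃ k, 1 ≤ k ∧ k ≤ r ∧ (k : ZMod r) = x := by
  have : NeZero r := ⟨hr.ne'⟩
  obtain ⟨k, hk₁, hkr, hk⟩ := Nat.exists_modEq_of_pos hr x.val
  exact ⟨k, hk₁, hkr, by rw [(natCast_eq_natCast_iff _ _ _).2 hk, natCast_zmod_val]⟩

theorem natCast_dvd_iff_exists_natCast_mul {r g : ℕ} (hr : 0 < r) (hgr : g ∣ r) (x : ZMod r) :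
    (g : ZMod r) ∣ x ↔ ∃ k, 1 ≤ k ∧ k ≤ r / g ∧ x = ((g * k : ℕ) : ZMod r) := by
  have : NeZero r := ⟨hr.ne'⟩
  constructor
  · rintro ⟨y, rfl⟩
    have hd : 0 < r / g := Nat.div_pos (Nat.le_of_dvd hr hgr) (Nat.pos_of_dvd_of_pos hgr hr)
    obtain ⟨k, hk₁, hkd, hk⟩ := Nat.exists_modEq_of_pos hd y.val
    refine ⟨k, hk₁, hkd, ?_⟩
    calc (g : ZMod r) * y = ((g * y.val : ℕ) : ZMod r) := by simp
      _ = ((g * k : ℕ) : ZMod r) :=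
        (natCast_eq_natCast_iff _ _ _).2 (Nat.mul_div_cancel' hgr ▸ hk.mul_left' g).symm
  · rintro ⟨k, -, -, rfl⟩
    exact ⟨k, Nat.cast_mul g k⟩

theorem natCast_gcd_dvd_iff (n : ℤ) (r : ℕ) (x : ZMod r) :
    ((n.gcd r : ℕ) : ZMod r) ∣ x ↔ (n : ZMod r) ∣ x := by
  have hgn : ((n.gcd r : ℕ) : ZMod r) ∣ n := by
    simpa using map_dvd (Int.castRingHom (ZMod r)) (Int.gcd_dvd_left n r)
  have hng : (n : ZMod r) ∣ (n.gcd r : ℕ) :=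
    ⟨n.gcdA r, by simpa using congrArg (Int.cast : ℤ → ZMod r) (Int.gcd_eq_gcd_ab n r)⟩
  exact ⟨hng.trans, hgn.trans⟩

theorem exists_lt_solution_iff {r : ℕ} (hr : 0 < r) (m₁ m₂ : ℤ) (x : ZMod r) :
    (∃ t₁ t₂ : ℕ, t₁ < r ∧ t₂ < r ∧ (r : ℤ) ∣ m₁ * ((t₁ : ℤ) + 1) + m₂ * (t₂ : ℤ) ∧
        x = ((t₁ + t₂ + 1 : ℕ) : ZMod r)) ↔
      ∃ s t : ZMod r, (m₁ : ZMod r) * s + m₂ * t = 0 ∧ x = s + t := by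
  have : NeZero r := ⟨hr.ne'⟩
  simp_rw [← intCast_zmod_eq_zero_iff_dvd]
  constructor
  · rintro ⟨t₁, t₂, -, -, h, rfl⟩
    exact ⟨t₁ + 1, t₂, by exact_mod_cast h, by push_cast; ring⟩
  · rintro ⟨s, t, h, rfl⟩
    obtain ⟨k, hk₁, hkr, rfl⟩ := exists_natCast_eq_of_pos hr s
    refine ⟨k - 1, t.val, by omega, t.val_lt, ?_, ?_⟩
    · push_cast [hk₁]
      simpa using h
    · rw [show k - 1 + t.val + 1 = k + t.val by omega]
      simp

end ZMod

theorem stmt_6_general (r : ℕ) (hr : 1 ≤ r) (m₁ m₂ : ℤ)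
    (h₁ : Int.gcd m₁ r = 1) :
    {x : ZMod r | ∃ t₁ t₂ : ℕ, t₁ < r ∧ t₂ < r ∧
        (r : ℤ) ∣ m₁ * ((t₁ : ℤ) + 1) + m₂ * (t₂ : ℤ) ∧
        x = ((t₁ + t₂ + 1 : ℕ) : ZMod r)} =
    {x : ZMod r | ∃ k : ℕ, 1 ≤ k ∧ k ≤ r / Int.gcd (m₂ - m₁) r ∧
        x = ((Int.gcd (m₂ - m₁) r * k : ℕ) : ZMod r)} := by
  have hm₁ : IsUnit (m₁ : ZMod r) :=
    (ZMod.coe_int_isUnit_iff_isCoprime m₁ r).2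
      (Int.isCoprime_iff_gcd_eq_one.2 (by rwa [Int.gcd_comm]))
  have hgr : Int.gcd (m₂ - m₁) r ∣ r := by exact_mod_cast Int.gcd_dvd_right (m₂ - m₁) r
  ext x
  rw [Set.mem_ofPred_eq, Set.mem_ofPred_eq, ZMod.exists_lt_solution_iff hr,
    exists_add_eq_iff_sub_dvd hm₁, ← ZMod.natCast_dvd_iff_exists_natCast_mul hr hgr,
    ZMod.natCast_gcd_dvd_iff, Int.cast_sub]

theorem stmt_6 (r : ℕ) (hr : 1 ≤ r) (m₁ m₂ : ℤ)
    (h₁ : Int.gcd m₁ r = 1) (h₂ : Int.gcd m₂ r = 1) :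
    {x : ZMod r | ∃ t₁ t₂ : ℕ, t₁ < r ∧ t₂ < r ∧
        (r : ℤ) ∣ m₁ * ((t₁ : ℤ) + 1) + m₂ * (t₂ : ℤ) ∧
        x = ((t₁ + t₂ + 1 : ℕ) : ZMod r)} =
    {x : ZMod r | ∃ k : ℕ, 1 ≤ k ∧ k ≤ r / Int.gcd (m₂ - m₁) r ∧
        x = ((Int.gcd (m₂ - m₁) r * k : ℕ) : ZMod r)} :=
  stmt_6_general r hr m₁ m₂ h₁
end

section
/- Let r ≥ 1 be an integer and let m₁, m₂, n₁, n₂ be integers coprime to r. For integers a, b coprime to r define the multiset W(a,b) over ZMod r as the multiset, indexed by t₁ ∈ {0,…,r−1}, of the elements ((t₁ + t₂ + 1 : ℕ) : ZMod r) where t₂ ∈ {0,…,r−1} is the unique solution of a·(t₁+1) + b·t₂ ≡ 0 (mod r). Then W(m₁,m₂) = W(n₁,n₂) if and only if Int.gcd (m₂ − m₁) r = Int.gcd (n₂ − n₁) r. -/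
/-! Solving for `t₂` gives `t₁ + t₂ + 1 = (b - a) · b⁻¹(t₁ + 1)` in `ZMod r`, and `t₁ ↦ b⁻¹(t₁ + 1)`
permutes `ZMod r`, so `W(a,b)` is the multiset of values of `x ↦ (b - a) x`. For an additive
homomorphism on a finite group every value is taken `|ker|` times, so this multiset is determined by
the image, the ideal `(b - a)`; and in `ZMod r` two integers generate the same ideal iff they have
the same gcd with `r`. -/

/-- The multiset `W(a,b)` over `ZMod r`: indexed by `t₁ ∈ {0,…,r−1}`, its elements are
`((t₁ + t₂ + 1 : ℕ) : ZMod r)` where `t₂ ∈ {0,…,r−1}` is the unique solution of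
`a·(t₁+1) + b·t₂ ≡ 0 (mod r)` (for `b` coprime to `r` this is
`t₂ = (−b⁻¹·a·(t₁+1) : ZMod r).val`). -/
def Wms (r : ℕ) (a b : ℤ) : Multiset (ZMod r) :=
  (Multiset.range r).map fun t₁ =>
    ((t₁ + (-(b : ZMod r)⁻¹ * (a : ZMod r) * (((t₁ + 1 : ℕ) : ZMod r))).val + 1 : ℕ) : ZMod r)

open Finset

namespace AddMonoidHom

variable {G H : Type*} [AddGroup G] [Fintype G] [AddGroup H] [DecidableEq H]

theorem count_map_univ_val_of_mem_range (f : G →+ H) {z : H} (hz : z ∈ f.range) :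
    (univ.val.map f).count z = Nat.card f.ker := by
  have hfiber : #{x | f x = z} = #{x | f x = 0} :=
    card_fiber_eq_of_mem_range f hz ⟨0, map_zero f⟩
  rw [Multiset.count_map]
  simp_rw [eq_comm (a := z)]
  rw [← Finset.filter_val, Finset.card_val, hfiber, Nat.card_eq_fintype_card,
    ← Fintype.card_subtype]
  exact Fintype.card_congr (Equiv.subtypeEquivRight fun _ => f.mem_ker.symm)

theorem map_univ_val_eq_iff_range_eq (f g : G →+ H) :
    univ.val.map f = univ.val.map g ↔ f.range = g.range := by
  constructor
  · intro h
    ext z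
    simpa using congrArg (z ∈ ·) h
  · intro h
    have hker : Nat.card f.ker = Nat.card g.ker := by
      have hf := f.ker.card_mul_index
      have hg := g.ker.card_mul_index
      rw [AddSubgroup.index_ker, h] at hf
      rw [AddSubgroup.index_ker] at hg
      exact Nat.eq_of_mul_eq_mul_right Nat.card_pos (hf.trans hg.symm)
    ext z
    by_cases hz : z ∈ f.range
    · rw [count_map_univ_val_of_mem_range f hz, count_map_univ_val_of_mem_range g (h ▸ hz), hker]
    · rw [Multiset.count_eq_zero.mpr (by simpa using hz),
        Multiset.count_eq_zero.mpr (by simpa [h] using hz)]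

theorem range_mulLeft_le_iff {R : Type*} [Ring R] {c d : R} :
    (mulLeft c).range ≤ (mulLeft d).range ↔ d ∣ c := by
  constructor
  · intro h
    obtain ⟨x, hx⟩ := h ⟨1, mul_one c⟩
    exact ⟨x, hx.symm⟩
  · rintro ⟨k, rfl⟩ _ ⟨x, rfl⟩
    exact ⟨k * x, (mul_assoc d k x).symm⟩

end AddMonoidHom

theorem map_univ_val_mul_left_eq_iff {R : Type*} [Ring R] [Fintype R] [DecidableEq R] {c d : R} :
    univ.val.map (c * ·) = univ.val.map (d * ·) ↔ c ∣ d ∧ d ∣ c := by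
  rw [← AddMonoidHom.coe_mulLeft, ← AddMonoidHom.coe_mulLeft,
    AddMonoidHom.map_univ_val_eq_iff_range_eq, le_antisymm_iff,
    AddMonoidHom.range_mulLeft_le_iff, AddMonoidHom.range_mulLeft_le_iff, and_comm]

namespace ZMod

theorem intCast_dvd_intCast_iff {r : ℕ} {a b : ℤ} :
    (a : ZMod r) ∣ (b : ZMod r) ↔ (Int.gcd a r : ℤ) ∣ b := by
  have hsolv : (a : ZMod r) ∣ (b : ZMod r) ↔ ∃ k l : ℤ, b = a * k + r * l := by
    constructor
    · rintro ⟨x, hx⟩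
      obtain ⟨k, rfl⟩ := intCast_surjective x
      rw [← Int.cast_mul, intCast_eq_intCast_iff_dvd_sub] at hx
      obtain ⟨l, hl⟩ := hx
      exact ⟨k, -l, by linear_combination -hl⟩
    · rintro ⟨k, l, rfl⟩
      exact ⟨k, by push_cast; simp⟩
  rw [hsolv]
  constructor
  · rintro ⟨k, l, rfl⟩
    exact dvd_add ((Int.gcd_dvd_left a r).mul_right k) ((Int.gcd_dvd_right a r).mul_right l)
  · rintro ⟨m, rfl⟩
    exact ⟨Int.gcdA a r * m, Int.gcdB a r * m, by rw [Int.gcd_eq_gcd_ab]; ring⟩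

theorem intCast_dvd_dvd_iff_gcd_eq {r : ℕ} {a b : ℤ} :
    ((a : ZMod r) ∣ b ∧ (b : ZMod r) ∣ a) ↔ Int.gcd a r = Int.gcd b r := by
  simp only [intCast_dvd_intCast_iff]
  constructor
  · rintro ⟨hab, hba⟩
    refine Nat.dvd_antisymm ?_ ?_ <;> rw [← Int.natCast_dvd_natCast]
    · exact Int.dvd_coe_gcd hab (Int.gcd_dvd_right a r)
    · exact Int.dvd_coe_gcd hba (Int.gcd_dvd_right b r)
  · intro h
    exact ⟨h ▸ Int.gcd_dvd_left b r, h ▸ Int.gcd_dvd_left a r⟩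

theorem isUnit_intCast_of_gcd_eq_one {r : ℕ} {z : ℤ} (h : Int.gcd z r = 1) :
    IsUnit (z : ZMod r) := by
  rw [isUnit_iff_dvd_one, ← Int.cast_one, intCast_dvd_intCast_iff, h, Nat.cast_one]

theorem map_natCast_range (r : ℕ) [NeZero r] :
    (Multiset.range r).map (Nat.cast : ℕ → ZMod r) = univ.val := by
  have hnodup : ((Multiset.range r).map (Nat.cast : ℕ → ZMod r)).Nodup := by
    refine (Multiset.nodup_range r).map_on fun x hx y hy hxy => ?_
    rw [← val_cast_of_lt (Multiset.mem_range.mp hx),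
      ← val_cast_of_lt (Multiset.mem_range.mp hy), hxy]
  exact congrArg Finset.val (Finset.eq_univ_of_card ⟨_, hnodup⟩ (by simp))

end ZMod

theorem Wms_eq_map_univ_val {r : ℕ} [NeZero r] {a b : ℤ} (hb : IsUnit (b : ZMod r)) :
    Wms r a b = univ.val.map (((b - a : ℤ) : ZMod r) * ·) := by
  let e : ZMod r ≃ ZMod r := (Equiv.addRight 1).trans (Units.mulLeft hb.unit⁻¹)
  have he (t : ℕ) : ((t + (-(b : ZMod r)⁻¹ * a * ((t + 1 : ℕ) : ZMod r)).val + 1 : ℕ) : ZMod r)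
      = ((b - a : ℤ) : ZMod r) * e t := by
    have hinv : ((hb.unit⁻¹ : (ZMod r)ˣ) : ZMod r) = (b : ZMod r)⁻¹ := by
      rw [← ZMod.inv_coe_unit, IsUnit.unit_spec]
    simp only [e, Equiv.trans_apply, Equiv.coe_addRight, Units.mulLeft_apply, hinv]
    push_cast [ZMod.natCast_val, ZMod.cast_id]
    linear_combination -(t + 1 : ZMod r) * ZMod.inv_mul_of_unit _ hb
  calc Wms r a b
        = ((Multiset.range r).map (Nat.cast : ℕ → ZMod r)).map (((b - a : ℤ) : ZMod r) * e ·) := by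
        rw [Wms, Multiset.map_map]
        exact Multiset.map_congr rfl fun t _ => he t
    _ = (univ.val.map e).map (((b - a : ℤ) : ZMod r) * ·) := by
        rw [ZMod.map_natCast_range, Multiset.map_map]; rfl
    _ = univ.val.map (((b - a : ℤ) : ZMod r) * ·) := by rw [Multiset.map_univ_val_equiv]

theorem stmt_7_general (r : ℕ) (hr : 1 ≤ r) (m₁ m₂ n₁ n₂ : ℤ)
    (hm₂ : Int.gcd m₂ r = 1) (hn₂ : Int.gcd n₂ r = 1) :
    Wms r m₁ m₂ = Wms r n₁ n₂ ↔ Int.gcd (m₂ - m₁) r = Int.gcd (n₂ - n₁) r := by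
  have : NeZero r := ⟨by omega⟩
  rw [Wms_eq_map_univ_val (ZMod.isUnit_intCast_of_gcd_eq_one hm₂),
    Wms_eq_map_univ_val (ZMod.isUnit_intCast_of_gcd_eq_one hn₂),
    map_univ_val_mul_left_eq_iff, ZMod.intCast_dvd_dvd_iff_gcd_eq]

theorem stmt_7 (r : ℕ) (hr : 1 ≤ r) (m₁ m₂ n₁ n₂ : ℤ)
    (hm₁ : Int.gcd m₁ r = 1) (hm₂ : Int.gcd m₂ r = 1)
    (hn₁ : Int.gcd n₁ r = 1) (hn₂ : Int.gcd n₂ r = 1) :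
    Wms r m₁ m₂ = Wms r n₁ n₂ ↔ Int.gcd (m₂ - m₁) r = Int.gcd (n₂ - n₁) r :=
  stmt_7_general r hr m₁ m₂ n₁ n₂ hm₂ hn₂
end

section
/- Fix an integer r ≥ 1 and let i, j be units of ZMod r. Let Y, Y', Z be r×r integer matrices indexed by ZMod r satisfying S^i·Y − Y·S^j = Z and S^i·Y' − Y'·S^j = Z. If Y and Y' have the same first column, i.e. Y a 0 = Y' a 0 for all a ∈ ZMod r, then Y = Y'. (In other words, a solution Y of S^i·Y − Y·S^j = Z is completely determined by its first column.) -/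
/-- The matrix `S^t` for `t ∈ ZMod r`: `(S^t) i j = 1` if `i = j − t` and `0` otherwise. -/
def Smat (r : ℕ) (t : ZMod r) : Matrix (ZMod r) (ZMod r) ℤ :=
  Matrix.of fun i j => if i = j - t then 1 else 0

lemma Smat_mul_apply (r : ℕ) [NeZero r] (t : ZMod r) (M : Matrix (ZMod r) (ZMod r) ℤ) (a b : ZMod r) :
    (Smat r t * M) a b = M (a + t) b := by
  simp only [Matrix.mul_apply, Smat, Matrix.of_apply]
  rw [Finset.sum_eq_single (a + t)]
  · simp [eq_sub_iff_add_eq]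
  · intro k _ hk
    rw [if_neg, zero_mul]
    intro h; exact hk (by rw [h]; ring)
  · simp

lemma mul_Smat_apply (r : ℕ) [NeZero r] (t : ZMod r) (M : Matrix (ZMod r) (ZMod r) ℤ) (a b : ZMod r) :
    (M * Smat r t) a b = M a (b - t) := by
  simp only [Matrix.mul_apply, Smat, Matrix.of_apply]
  rw [Finset.sum_eq_single (b - t)]
  · simp
  · intro k _ hk
    rw [if_neg hk, mul_zero]
  · simp

theorem stmt_8 (r : ℕ) [NeZero r] (i j : (ZMod r)ˣ)
    (Y Y' Z : Matrix (ZMod r) (ZMod r) ℤ)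
    (hY : Smat r (i : ZMod r) * Y - Y * Smat r (j : ZMod r) = Z)
    (hY' : Smat r (i : ZMod r) * Y' - Y' * Smat r (j : ZMod r) = Z)
    (hcol : ∀ a : ZMod r, Y a 0 = Y' a 0) :
    Y = Y' := by
  set D := Y - Y' with hD
  have hS : Smat r (i : ZMod r) * D = D * Smat r (j : ZMod r) := by
    have := hY.trans hY'.symm
    rw [hD]
    rw [Matrix.mul_sub, Matrix.sub_mul]
    linear_combination (norm := abel) this
  have key : ∀ a b : ZMod r, D a (b - (j : ZMod r)) = D (a + (i : ZMod r)) b := by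
    intro a b
    have := congrFun (congrFun hS a) b
    rw [Smat_mul_apply, mul_Smat_apply] at this
    exact this.symm
  have claim : ∀ n : ℕ, ∀ a : ZMod r, D a (-(n : ZMod r) * (j : ZMod r)) = 0 := by
    intro n
    induction n with
    | zero => intro a; simpa [hD, Matrix.sub_apply, sub_eq_zero] using hcol a
    | succ n ih =>
        intro a
        have : (-((n : ℕ) + 1 : ZMod r)) * (j : ZMod r)
            = (-(n : ZMod r)) * (j : ZMod r) - (j : ZMod r) := by ring
        push_cast
        rw [this, key, ih]
  have hzero : ∀ a b : ZMod r, D a b = 0 := by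
    intro a b
    have h := claim (-b * ((j⁻¹ : (ZMod r)ˣ) : ZMod r)).val a
    rwa [ZMod.natCast_val, ZMod.cast_id, neg_mul, mul_assoc, Units.inv_mul, mul_one, neg_neg] at h
  ext a b
  have := hzero a b
  rw [hD, Matrix.sub_apply, sub_eq_zero] at this
  exact this
end

section
/- Fix an integer r ≥ 1 and let Z be an r×r integer matrix indexed by ZMod r. There exists an r×r integer matrix Y with S·Y − Y·S = Z if and only if trace(S^i · Z) = 0 for every i ∈ ZMod r. -/
lemma Smul_left (r : ℕ) [NeZero r] (t : ZMod r) (Z : Matrix (ZMod r) (ZMod r) ℤ) (i j : ZMod r) :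
    (Smat r t * Z) i j = Z (i + t) j := by
  simp only [Matrix.mul_apply, Smat, Matrix.of_apply, ite_mul, one_mul, zero_mul]
  rw [Finset.sum_eq_single (i + t)]
  · simp
  · intro b _ hb
    rw [if_neg]
    intro h
    exact hb (by rw [h]; ring)
  · simp

lemma Smul_right (r : ℕ) [NeZero r] (Z : Matrix (ZMod r) (ZMod r) ℤ) (i j : ZMod r) :
    (Z * Smat r 1) i j = Z i (j - 1) := by
  simp only [Matrix.mul_apply, Smat, Matrix.of_apply, mul_ite, mul_one, mul_zero]
  rw [Finset.sum_eq_single (j - 1)]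
  · simp
  · intro b _ hb
    rw [if_neg hb]
  · simp

lemma trace_eq (r : ℕ) [NeZero r] (t : ZMod r) (Z : Matrix (ZMod r) (ZMod r) ℤ) :
    Matrix.trace (Smat r t * Z) = ∑ m : ZMod r, Z (m + t) m := by
  simp [Matrix.trace, Matrix.diag, Smul_left]

lemma sum_zmod (r : ℕ) [NeZero r] (h : ZMod r → ℤ) :
    ∑ t : ZMod r, h t = ∑ m ∈ Finset.range r, h (m : ZMod r) := by
  refine Finset.sum_nbij' (fun t => t.val) (fun m => (m : ZMod r)) ?_ ?_ ?_ ?_ ?_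
  · intro a _; exact Finset.mem_range.mpr (ZMod.val_lt a)
  · intro a _; exact Finset.mem_univ _
  · intro a _; exact ZMod.natCast_rightInverse a
  · intro a ha; exact ZMod.val_cast_of_lt (Finset.mem_range.mp ha)
  · intro a _; rw [ZMod.natCast_rightInverse a]

lemma val_sub_one (r : ℕ) [NeZero r] (j : ZMod r) (hj : j ≠ 0) : ((j - 1).val) + 1 = j.val := by
  obtain ⟨k, hk⟩ : ∃ k, j.val = k + 1 :=
    Nat.exists_eq_succ_of_ne_zero (fun h => hj (by rwa [← ZMod.val_eq_zero]))
  have hjk : j = ((k + 1 : ℕ) : ZMod r) := by rw [← hk, ZMod.natCast_val, ZMod.cast_id]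
  have : j - 1 = ((k : ℕ) : ZMod r) := by rw [hjk]; push_cast; ring
  rw [this, ZMod.val_cast_of_lt, hk]
  have := ZMod.val_lt j; omega

lemma val_zero_sub_one (r : ℕ) [NeZero r] : ((0 : ZMod r) - 1).val = r - 1 := by
  have hr1 : 1 ≤ r := Nat.one_le_iff_ne_zero.mpr (NeZero.ne r)
  have hr : (0 : ZMod r) - 1 = ((r - 1 : ℕ) : ZMod r) := by
    have h0 : ((r : ℕ) : ZMod r) = 0 := ZMod.natCast_self r
    rw [← h0]; push_cast [hr1]; ring
  rw [hr, ZMod.val_cast_of_lt]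
  omega

theorem stmt_9 (r : ℕ) [NeZero r] (Z : Matrix (ZMod r) (ZMod r) ℤ) :
    (∃ Y : Matrix (ZMod r) (ZMod r) ℤ, Smat r 1 * Y - Y * Smat r 1 = Z) ↔
      ∀ i : ZMod r, Matrix.trace (Smat r i * Z) = 0 := by
  constructor
  · rintro ⟨Y, rfl⟩ i
    rw [trace_eq]
    have key : ∀ m : ZMod r, (Smat r 1 * Y - Y * Smat r 1) (m + i) m
        = Y (m + i + 1) m - Y (m + i) (m - 1) := by
      intro m
      rw [Matrix.sub_apply, Smul_left, Smul_right]
    simp only [key]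
    rw [Finset.sum_sub_distrib, sub_eq_zero]
    exact Fintype.sum_equiv (Equiv.addRight (1 : ZMod r)) _ _ (fun x => by
      simp only [Equiv.coe_addRight, add_sub_cancel_right]
      congr 1
      ring)
  · intro h
    refine ⟨Matrix.of fun i j =>
      ∑ m ∈ Finset.range j.val, Z ((m : ZMod r) + i - j) ((m : ZMod r) + 1), ?_⟩
    ext i j
    rw [Matrix.sub_apply, Smul_left, Smul_right]
    simp only [Matrix.of_apply]
    by_cases hj : j = 0
    · subst hj
      have h0 : (0 : ZMod r).val = 0 := ZMod.val_zero
      rw [h0]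
      simp only [Finset.range_zero, Finset.sum_empty]
      rw [val_zero_sub_one r]
      have hsum : ∑ m ∈ Finset.range (r - 1), Z ((m : ZMod r) + i - (0 - 1)) ((m : ZMod r) + 1)
          = ∑ m ∈ Finset.range (r - 1), Z (((m + 1 : ℕ) : ZMod r) + i) ((m + 1 : ℕ) : ZMod r) := by
        refine Finset.sum_congr rfl (fun m _ => ?_)
        congr 1 <;> push_cast <;> ring
      rw [hsum]
      have hr1 : 1 ≤ r := Nat.one_le_iff_ne_zero.mpr (NeZero.ne r)
      have htr : ∑ m ∈ Finset.range r, Z ((m : ZMod r) + i) ((m : ZMod r)) = 0 := by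
        rw [← sum_zmod r (fun t => Z (t + i) t), ← trace_eq]
        exact h i
      rw [show Finset.range r = Finset.range ((r - 1) + 1) from by rw [Nat.sub_add_cancel hr1],
        Finset.sum_range_succ'] at htr
      simp only [Nat.cast_zero, zero_add, Nat.cast_add, Nat.cast_one] at htr ⊢
      linarith [htr]
    · have hv := val_sub_one r j hj
      have heq : ∑ m ∈ Finset.range j.val, Z ((m : ZMod r) + (i + 1) - j) ((m : ZMod r) + 1)
          = (∑ m ∈ Finset.range ((j-1).val), Z ((m : ZMod r) + i - (j - 1)) ((m : ZMod r) + 1))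
            + Z ((((j-1).val : ℕ) : ZMod r) + (i + 1) - j) ((((j-1).val : ℕ) : ZMod r) + 1) := by
        rw [← hv, Finset.sum_range_succ]
        congr 1
        refine Finset.sum_congr rfl (fun m _ => ?_)
        congr 1
        ring
      rw [heq]
      have hcast : (((j - 1).val : ℕ) : ZMod r) = j - 1 := ZMod.natCast_rightInverse _
      rw [hcast, add_sub_cancel_left]
      congr 1 <;> ring
end

section
/- Let r be a prime, let c be a unit of ZMod r with c ≠ 1, and let a, b ∈ ZMod r. Then there exists an r×r integer matrix X indexed by ZMod r such that S·X − X·S = S^a·P_c − S^b·P_c. -/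
/-- The matrix `P_α` for a unit `α` of `ZMod r`: `(P_α) i j = 1` if `i = α·j` and `0` otherwise. -/
def Pmat (r : ℕ) (a : ZMod r) : Matrix (ZMod r) (ZMod r) ℤ :=
  Matrix.of fun i j => if i = a * j then 1 else 0

/-!
Since `P_c S = S^c P_c`, the commutator of `S` with `S^(t-1) P_c` is `S^t P_c - S^(t+e) P_c`
with `e = c - 1`. Summing these over `t = a, a + e, a + 2e, …` telescopes, and since `e` is
invertible modulo the prime `r`, the progression reaches `b`.
-/

section

variable {r : ℕ} [NeZero r]

lemma Smat_mul_Smat (s t : ZMod r) : Smat r s * Smat r t = Smat r (s + t) := by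
  ext i j
  simp only [Smat, Matrix.mul_apply, Matrix.of_apply]
  rw [Finset.sum_eq_single (j - t)]
  · simp [sub_sub, add_comm]
  · intro k _ hk; simp [hk]
  · simp

lemma Pmat_mul_Smat (c t : ZMod r) : Pmat r c * Smat r t = Smat r (c * t) * Pmat r c := by
  ext i j
  simp only [Pmat, Smat, Matrix.mul_apply, Matrix.of_apply]
  rw [Finset.sum_eq_single (j - t), Finset.sum_eq_single (c * j)]
  · simp [mul_sub]
  · intro k _ hk; simp [hk]
  · simp
  · intro k _ hk; simp [hk]
  · simp

lemma Smat_one_commutator_Smat_mul_Pmat (c t : ZMod r) :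
    Smat r 1 * (Smat r (t - 1) * Pmat r c) - Smat r (t - 1) * Pmat r c * Smat r 1
      = Smat r t * Pmat r c - Smat r (t + (c - 1)) * Pmat r c := by
  rw [← mul_assoc, Smat_mul_Smat, mul_assoc, Pmat_mul_Smat, ← mul_assoc, Smat_mul_Smat]
  congr 3 <;> ring

lemma exists_Smat_one_commutator_eq_Smat_mul_Pmat_sub (c t : ZMod r) (n : ℕ) :
    ∃ X : Matrix (ZMod r) (ZMod r) ℤ, Smat r 1 * X - X * Smat r 1
      = Smat r t * Pmat r c - Smat r (t + n * (c - 1)) * Pmat r c := by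
  induction n with
  | zero => exact ⟨0, by simp⟩
  | succ n ih =>
    obtain ⟨X, hX⟩ := ih
    refine ⟨X + Smat r (t + n * (c - 1) - 1) * Pmat r c, ?_⟩
    rw [mul_add, add_mul, add_sub_add_comm, hX, Smat_one_commutator_Smat_mul_Pmat]
    push_cast
    rw [add_assoc t, ← add_one_mul]
    abel

end

theorem stmt_12 (r : ℕ) [NeZero r] (hr : r.Prime) (c : (ZMod r)ˣ)
    (hc : (c : ZMod r) ≠ 1) (a b : ZMod r) :
    ∃ X : Matrix (ZMod r) (ZMod r) ℤ,
      Smat r 1 * X - X * Smat r 1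
        = Smat r a * Pmat r (c : ZMod r) - Smat r b * Pmat r (c : ZMod r) := by
  have := Fact.mk hr
  have hc' : (c : ZMod r) - 1 ≠ 0 := sub_ne_zero.mpr hc
  have hb : a + (((b - a) / ((c : ZMod r) - 1)).val : ZMod r) * ((c : ZMod r) - 1) = b := by
    rw [ZMod.natCast_zmod_val, div_mul_cancel₀ _ hc', add_sub_cancel]
  simpa only [hb] using exists_Smat_one_commutator_eq_Smat_mul_Pmat_sub (c : ZMod r) a
    ((b - a) / ((c : ZMod r) - 1)).val
end

section
/- Let r be an odd prime and let α, β ∈ ZMod r. Define γ(α,β) to be the number of j ∈ ZMod r such that (α·j + β).val ≤ j.val. Then: γ(α,β) = r if α = 0 and β = 0; γ(α,β) = r − β.val if α = 0 and β ≠ 0; γ(α,β) = r if α = 1 and β = 0; γ(α,β) = β.val if α = 1 and β ≠ 0; and γ(α,β) = (r+1)/2 in all other cases (i.e. when α ≠ 0 and α ≠ 1). -/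
/-!
Write `α * j + β = j + g j` with `g j = (α - 1) * j + β`. Then `(α * j + β).val ≤ j.val` holds
exactly when `g j = 0` or the addition `j + g j` carries, i.e. `r ≤ j.val + (g j).val`. When `α` and
`α - 1` are units, both `g` and `j ↦ α * j + β` permute `ZMod r`, so summing
`j.val + (g j).val = (j + g j).val + r * carry` over all `j` shows that there are
`(∑ j, j.val) / r = (r - 1) / 2` carries; the unique root of `g` adds one more.
-/

open Finset

namespace ZMod

variable {n : ℕ} [NeZero n]

lemma val_add_le_val_iff (x y : ZMod n) : (x + y).val ≤ x.val ↔ y = 0 ∨ n ≤ x.val + y.val := by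
  rcases lt_or_ge (x.val + y.val) n with h | h
  · simp only [val_add_of_lt h, add_le_iff_nonpos_right, nonpos_iff_eq_zero, val_eq_zero,
      not_le.2 h, or_false]
  · have hcarry := val_add_val_of_le h
    have hy := val_lt y
    simp only [h, or_true, iff_true]
    omega

lemma sum_val_add_sum_val {ι : Type*} [Fintype ι] (u v : ι → ZMod n) :
    ∑ i, (u i).val + ∑ i, (v i).val
      = ∑ i, (u i + v i).val + n * #{i | n ≤ (u i).val + (v i).val} := by
  rw [← sum_add_distrib, card_filter, mul_sum, ← sum_add_distrib]
  refine sum_congr rfl fun i _ => ?_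
  split_ifs with h
  · rw [mul_one, val_add_val_of_le h]
  · rw [mul_zero, add_zero, val_add_of_lt (not_le.1 h)]

lemma sum_val_mul_two : (∑ j : ZMod n, j.val) * 2 = n * (n - 1) := by
  obtain ⟨m, rfl⟩ := Nat.exists_eq_succ_of_ne_zero (NeZero.ne n)
  rw [← sum_range_id_mul_two, ← Fin.sum_univ_eq_sum_range]
  rfl

lemma card_le_val (k : ℕ) : Nat.card {j : ZMod n // k ≤ j.val} = n - k := by
  obtain ⟨m, rfl⟩ := Nat.exists_eq_succ_of_ne_zero (NeZero.ne n)
  rw [Nat.card_eq_fintype_card, Fintype.card_subtype]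
  have hlt := Fin.card_filter_val_lt (n := m.succ) (m := k)
  have hcompl := card_filter_add_card_filter_not (s := univ) (fun i : Fin m.succ => i.val < k)
  simp only [not_lt, card_univ, Fintype.card_fin] at hcompl
  change #{j : Fin m.succ | k ≤ j.val} = _
  omega

lemma card_add_val_le_val_of_ne_zero {β : ZMod n} (hβ : β ≠ 0) :
    Nat.card {j : ZMod n // (j + β).val ≤ j.val} = β.val := by
  simp_rw [val_add_le_val_iff, hβ, false_or, ← Nat.sub_le_iff_le_add]
  rw [card_le_val, Nat.sub_sub_self (val_lt β).le]

theorem card_mul_add_val_le_val_of_isUnit {α β : ZMod n} (hα : IsUnit α) (hα1 : IsUnit (α - 1)) :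
    Nat.card {j : ZMod n // (α * j + β).val ≤ j.val} = (n + 1) / 2 := by
  have affine {u : ZMod n} (hu : IsUnit u) : ∃ e : Equiv.Perm (ZMod n), ∀ j, e j = u * j + β :=
    ⟨hu.unit.mulLeft.trans (Equiv.addRight β), fun _ => rfl⟩
  obtain ⟨e, he⟩ := affine hα1
  obtain ⟨f, hf⟩ := affine hα
  have hef (j : ZMod n) : j + e j = f j := by
    rw [he, hf]
    ring
  have hsplit (j : ZMod n) : (α * j + β).val ≤ j.val ↔ e j = 0 ∨ n ≤ j.val + (e j).val := by
    rw [← val_add_le_val_iff, hef, hf]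
  have hroot : #{j | e j = 0} = 1 := by
    simp_rw [← Equiv.eq_symm_apply, filter_eq', if_pos (mem_univ _), card_singleton]
  have hcarry : #{j | n ≤ j.val + (e j).val} * 2 = n - 1 := by
    have hsum := sum_val_add_sum_val (fun j => j) e
    simp only [hef, Equiv.sum_comp, Nat.add_left_cancel_iff] at hsum
    apply Nat.eq_of_mul_eq_mul_left (NeZero.pos n)
    rw [← mul_assoc, ← hsum, sum_val_mul_two]
  rw [Nat.card_eq_fintype_card, Fintype.card_subtype, filter_congr fun j _ => hsplit j,
    filter_or, card_union_of_disjoint, hroot]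
  · have := NeZero.pos n
    omega
  · exact disjoint_filter.2 fun j _ h0 => by rw [h0, val_zero, add_zero]; exact not_le.2 (val_lt j)

end ZMod

theorem stmt_13_general (r : ℕ) (hr : r.Prime) (α β : ZMod r) :
    ((α = 0 ∧ β = 0) → Nat.card {j : ZMod r // (α * j + β).val ≤ j.val} = r) ∧
    ((α = 0 ∧ β ≠ 0) → Nat.card {j : ZMod r // (α * j + β).val ≤ j.val} = r - β.val) ∧
    ((α = 1 ∧ β = 0) → Nat.card {j : ZMod r // (α * j + β).val ≤ j.val} = r) ∧
    ((α = 1 ∧ β ≠ 0) → Nat.card {j : ZMod r // (α * j + β).val ≤ j.val} = β.val) ∧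
    ((α ≠ 0 ∧ α ≠ 1) →
      Nat.card {j : ZMod r // (α * j + β).val ≤ j.val} = (r + 1) / 2) := by
  have : Fact r.Prime := ⟨hr⟩
  refine ⟨?_, ?_, ?_, ?_, ?_⟩
  · rintro ⟨rfl, rfl⟩
    simp
  · rintro ⟨rfl, -⟩
    simpa using ZMod.card_le_val (n := r) β.val
  · rintro ⟨rfl, rfl⟩
    simp
  · rintro ⟨rfl, hβ⟩
    simpa using ZMod.card_add_val_le_val_of_ne_zero hβ
  · rintro ⟨hα, hα1⟩
    exact ZMod.card_mul_add_val_le_val_of_isUnit hα.isUnit (sub_ne_zero.2 hα1).isUnit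

theorem stmt_13 (r : ℕ) (hr : r.Prime) (hodd : Odd r) (α β : ZMod r) :
    ((α = 0 ∧ β = 0) → Nat.card {j : ZMod r // (α * j + β).val ≤ j.val} = r) ∧
    ((α = 0 ∧ β ≠ 0) → Nat.card {j : ZMod r // (α * j + β).val ≤ j.val} = r - β.val) ∧
    ((α = 1 ∧ β = 0) → Nat.card {j : ZMod r // (α * j + β).val ≤ j.val} = r) ∧
    ((α = 1 ∧ β ≠ 0) → Nat.card {j : ZMod r // (α * j + β).val ≤ j.val} = β.val) ∧
    ((α ≠ 0 ∧ α ≠ 1) →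
      Nat.card {j : ZMod r // (α * j + β).val ≤ j.val} = (r + 1) / 2) :=
  stmt_13_general r hr α β
end

section
/- Let r be an odd prime and let m be a unit of ZMod r with m ≠ 1 and m ≠ 2⁻¹, and set n := (2 − m⁻¹)⁻¹ in ZMod r. For i ∈ {0,…,r−2} define the integers X_i := 1 + i + ((−m⁻¹·(i+1) : ZMod r)).val and Y_i := 1 + i + ((−n⁻¹·(i+1) : ZMod r)).val. Then for each i ∈ {0,…,r−2} one of the following holds: (1) X_i = Y_{r−2−i} and Y_i = X_{r−2−i}; (2) X_i = Y_{r−2−i} − r and Y_i = X_{r−2−i} − r; (3) X_i = Y_{r−2−i} + r and Y_i = X_{r−2−i} + r. -/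
/-- `Xval r m i = 1 + i + t₂` where `t₂ ∈ {0,…,r−1}` is the canonical representative of
`−m⁻¹·(i+1)` in `ZMod r`, i.e. the unique solution of `1 + i + m·t₂ ≡ 0 (mod r)`
when `m` is a unit. -/
def Xval (r : ℕ) (m : ZMod r) (i : ℕ) : ℤ :=
  1 + (i : ℤ) + ((-m⁻¹ * ((i : ZMod r) + 1)).val : ℤ)

lemma Xval_cast (r : ℕ) [NeZero r] (u : ZMod r) (i : ℕ) :
    ((Xval r u i : ℤ) : ZMod r) = ((i : ZMod r) + 1) * (1 - u⁻¹) := by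
  simp only [Xval]
  push_cast
  rw [ZMod.natCast_val, ZMod.cast_id]
  ring

lemma iadd_ne (r : ℕ) (hr : 2 ≤ r) (i : ℕ) (hi : i ≤ r - 2) :
    ((i : ZMod r) + 1) ≠ 0 := by
  have : ((i : ZMod r) + 1) = ((i + 1 : ℕ) : ZMod r) := by push_cast; ring
  rw [this, Ne, ZMod.natCast_eq_zero_iff]
  intro h
  have := Nat.le_of_dvd (by omega) h
  omega

lemma j_cast (r : ℕ) (hr : 2 ≤ r) (i : ℕ) (hi : i ≤ r - 2) :
    (((r - 2 - i : ℕ) : ZMod r) + 1) = -((i : ZMod r) + 1) := by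
  have h : (r - 2 - i) + 1 + (i + 1) = r := by omega
  have := congrArg (Nat.cast : ℕ → ZMod r) h
  push_cast at this
  rw [ZMod.natCast_self] at this
  linear_combination this

lemma Xval_add (r : ℕ) (hr : r.Prime) (u : ZMod r) (hu : u ≠ 0) (i : ℕ) (hi : i ≤ r - 2) :
    Xval r u i + Xval r u (r - 2 - i) = 2 * r := by
  haveI : Fact r.Prime := ⟨hr⟩
  set j := r - 2 - i with hj
  have h2 : 2 ≤ r := hr.two_le
  set a := -u⁻¹ * ((i : ZMod r) + 1) with hadef
  have ha : (-u⁻¹ * ((j : ZMod r) + 1)) = -a := by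
    rw [hj, j_cast r h2 i hi, hadef]; ring
  have hane : a ≠ 0 := by
    apply mul_ne_zero
    · simpa using inv_ne_zero hu
    · exact iadd_ne r h2 i hi
  have hval : a.val + (-a).val = r := by
    rw [ZMod.neg_val, if_neg hane]
    have := ZMod.val_lt a
    omega
  simp only [Xval, ha]
  rw [← hadef]
  omega

theorem stmt_14 (r : ℕ) (hr : r.Prime) (hodd : Odd r) (m n : ZMod r)
    (hm : IsUnit m) (hm1 : m ≠ 1) (hm2 : m ≠ 2⁻¹) (hn : n = (2 - m⁻¹)⁻¹)
    (i : ℕ) (hi : i ≤ r - 2) :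
    (Xval r m i = Xval r n (r - 2 - i) ∧ Xval r n i = Xval r m (r - 2 - i)) ∨
    (Xval r m i = Xval r n (r - 2 - i) - r ∧ Xval r n i = Xval r m (r - 2 - i) - r) ∨
    (Xval r m i = Xval r n (r - 2 - i) + r ∧ Xval r n i = Xval r m (r - 2 - i) + r) := by
  haveI : Fact r.Prime := ⟨hr⟩
  have h2 : 2 ≤ r := hr.two_le
  set j := r - 2 - i with hj
  have hji : r - 2 - j = i := by omega
  have hjle : j ≤ r - 2 := by omega
  have hm0 : m ≠ 0 := hm.ne_zero
  have h2m : (2 : ZMod r) - m⁻¹ ≠ 0 := by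
    intro h
    apply hm2
    have : m⁻¹ = 2 := by linear_combination -h
    rw [← this, inv_inv]
  have hn0 : n ≠ 0 := by rw [hn]; exact inv_ne_zero h2m
  have hninv : n⁻¹ = 2 - m⁻¹ := by rw [hn, inv_inv]
  have hdvd : (r : ℤ) ∣ Xval r m i - Xval r n j := by
    rw [← ZMod.intCast_zmod_eq_zero_iff_dvd]
    push_cast
    rw [Xval_cast, Xval_cast, hj, j_cast r h2 i hi, hninv]
    ring
  have hb : ∀ (u : ZMod r) (k : ℕ), k ≤ r - 2 → 1 ≤ Xval r u k ∧ Xval r u k ≤ 2 * r - 2 := by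
    intro u k hk
    have h1 : (-u⁻¹ * ((k : ZMod r) + 1)).val < r := ZMod.val_lt _
    simp only [Xval]
    omega
  obtain ⟨hb1, hb2⟩ := hb m i hi
  obtain ⟨hb3, hb4⟩ := hb n j hjle
  have hs1 : Xval r m i + Xval r m j = 2 * r := Xval_add r hr m hm0 i hi
  have hs2 : Xval r n j + Xval r n i = 2 * r := by
    have h := Xval_add r hr n hn0 j hjle
    rwa [hji] at h
  obtain ⟨k, hk⟩ := hdvd
  have hr0 : (0 : ℤ) < r := by exact_mod_cast hr.pos
  have hk1 : k ≤ 1 := by nlinarith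
  have hk2 : -1 ≤ k := by nlinarith
  interval_cases k
  · right; left; constructor <;> linarith
  · left; constructor <;> linarith
  · right; right; constructor <;> linarith
end

section
/- Let r be an odd prime and let m, n be units of ZMod r. For i ∈ {0,…,r−2} define the integers X_i := 1 + i + ((−m⁻¹·(i+1) : ZMod r)).val and Y_i := 1 + i + ((−n⁻¹·(i+1) : ZMod r)).val. Then r divides X_i + Y_i for every i ∈ {0,…,r−2} if and only if m⁻¹ + n⁻¹ = 2 in ZMod r (equivalently, n = (2 − m⁻¹)⁻¹). -/
theorem stmt_15 (r : ℕ) (hr : r.Prime) (hodd : Odd r) (m n : ZMod r)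
    (hm : IsUnit m) (hn : IsUnit n) :
    (∀ i : ℕ, i ≤ r - 2 → (r : ℤ) ∣ Xval r m i + Xval r n i) ↔ m⁻¹ + n⁻¹ = 2 := by
  haveI : Fact r.Prime := ⟨hr⟩
  have key : ∀ i : ℕ, ((Xval r m i + Xval r n i : ℤ) : ZMod r)
      = ((i : ZMod r) + 1) * (2 - m⁻¹ - n⁻¹) := by
    intro i
    simp only [Xval]
    push_cast
    rw [ZMod.natCast_val, ZMod.natCast_val, ZMod.cast_id, ZMod.cast_id]
    ring
  constructor
  · intro h
    have h0 := h 0 (Nat.zero_le _)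
    rw [← ZMod.intCast_zmod_eq_zero_iff_dvd, key] at h0
    push_cast at h0
    linear_combination -h0
  · intro h i _
    rw [← ZMod.intCast_zmod_eq_zero_iff_dvd, key]
    linear_combination (-(i : ZMod r) - 1) * h
end

section
/- Let r ≥ 2 be an integer and let m be a unit of ZMod r. Then the multiset of integers { 1 + i + ((−m⁻¹·(i+1) : ZMod r)).val : i = 0, 1, …, r−2 } coincides with the multiset { 1 + i + ((−m·(i+1) : ZMod r)).val : i = 0, 1, …, r−2 }; that is, the multiset of path lengths W̃(r;(1,m)) equals W̃(r;(1,m⁻¹)). -/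
/-!
Put `x = i + 1 ∈ ZMod r`. Since `i + 1 < r`, `1 + i = x.val`, so with `0` adjoined both multisets
become `{x.val + (c * x).val : x ∈ ZMod r}` for `c = -m⁻¹` and `c = -m` respectively.
Multiplication by the unit `-m` permutes `ZMod r`, and reindexing by `x = -m * y` turns
`x.val + (-m⁻¹ * x).val` into `(-m * y).val + y.val`.
-/

theorem Multiset.map_univ_add_apply_symm {α M : Type*} [Fintype α] [AddCommMagma M]
    (e : Equiv.Perm α) (f : α → M) :
    Finset.univ.val.map (fun x => f x + f (e.symm x)) =
      Finset.univ.val.map (fun x => f x + f (e x)) := by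
  conv_lhs => rw [← Multiset.map_univ_val_equiv e, Multiset.map_map]
  exact Multiset.map_congr rfl fun x _ => by simp [add_comm]

namespace ZMod

theorem map_range_natCast (r : ℕ) [NeZero r] :
    (Multiset.range r).map (Nat.cast : ℕ → ZMod r) = Finset.univ.val := by
  have hinj : ∀ i ∈ Multiset.range r, ∀ j ∈ Multiset.range r, (i : ZMod r) = j → i = j := by
    intro i hi j hj h
    simpa [val_cast_of_lt (Multiset.mem_range.mp hi), val_cast_of_lt (Multiset.mem_range.mp hj)]
      using congrArg val h
  refine ((Multiset.nodup_range r).map_on hinj).ext Finset.univ.nodup |>.mpr fun x => ?_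
  simp only [Finset.mem_val, Finset.mem_univ, iff_true, Multiset.mem_map, Multiset.mem_range]
  exact ⟨x.val, x.val_lt, x.natCast_zmod_val⟩

theorem zero_cons_map_range_pred_natCast_add_one (r : ℕ) [NeZero r] :
    0 ::ₘ (Multiset.range (r - 1)).map (fun i : ℕ => (i : ZMod r) + 1) = Finset.univ.val := by
  rw [← map_range_natCast]
  obtain ⟨n, rfl⟩ := Nat.exists_eq_succ_of_ne_zero (NeZero.ne r)
  simp [Multiset.range, List.range_succ_eq_map, Function.comp_def]

theorem zero_cons_map_range_pred_eq_map_univ (r : ℕ) [NeZero r] (c : ZMod r) :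
    0 ::ₘ (Multiset.range (r - 1)).map (fun i : ℕ => 1 + i + (c * ((i : ZMod r) + 1)).val) =
      Finset.univ.val.map (fun x : ZMod r => x.val + (c * x).val) := by
  rw [← zero_cons_map_range_pred_natCast_add_one, Multiset.map_cons, Multiset.map_map]
  simp only [val_zero, mul_zero, add_zero]
  refine congrArg _ (Multiset.map_congr rfl fun i hi => ?_)
  have hi : i + 1 < r := by have := Multiset.mem_range.mp hi; omega
  simp only [Function.comp_apply, ← Nat.cast_succ, val_cast_of_lt hi, add_comm 1 i]

end ZMod

theorem stmt_16 (r : ℕ) (hr : 2 ≤ r) (m : ZMod r) (hm : IsUnit m) :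
    (Multiset.range (r - 1)).map
        (fun i : ℕ => 1 + i + (-m⁻¹ * ((i : ZMod r) + 1)).val) =
      (Multiset.range (r - 1)).map
        (fun i : ℕ => 1 + i + (-m * ((i : ZMod r) + 1)).val) := by
  have : NeZero r := ⟨by omega⟩
  have hinv : ((hm.unit⁻¹ : (ZMod r)ˣ) : ZMod r) = m⁻¹ := by
    rw [← ZMod.inv_coe_unit, hm.unit_spec]
  refine (Multiset.cons_inj_right 0).mp ?_
  rw [ZMod.zero_cons_map_range_pred_eq_map_univ, ZMod.zero_cons_map_range_pred_eq_map_univ]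
  simpa [Units.mulLeft_symm, hinv] using
    Multiset.map_univ_add_apply_symm (Units.mulLeft (-hm.unit)) ZMod.val
end

section
/- Let r be a prime and let m₁, m₂, m₃ be pairwise distinct units of ZMod r and n₁, n₂, n₃ be pairwise distinct units of ZMod r. For a triple w = (w₁,w₂,w₃) of units of ZMod r, define T(w) to be the multiset over ZMod r of the elements ((t₁ + t₂ + t₃ + 2 : ℕ) : ZMod r), taken over all triples (t₁,t₂,t₃) ∈ {0,…,r−1}³ such that w₁·(t₁+1) + w₂·(t₂+1) + w₃·t₃ = 0 in ZMod r and ((−w₂⁻¹·w₁·(t₁+1) : ZMod r)).val + ((−w₂⁻¹·w₃·t₃ − 1 : ZMod r)).val ≥ r. Then T((m₁,m₂,m₃)) = T((n₁,n₂,n₃)). -/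
/-- The multiset `T(w) = W̄(r;(w₁,w₂,w₃))` over `ZMod r`: the elements
`((t₁ + t₂ + t₃ + 2 : ℕ) : ZMod r)`, taken over all triples
`(t₁,t₂,t₃) ∈ {0,…,r−1}³` with `w₁·(t₁+1) + w₂·(t₂+1) + w₃·t₃ = 0` in `ZMod r` and
`(−w₂⁻¹·w₁·(t₁+1)).val + (−w₂⁻¹·w₃·t₃ − 1).val ≥ r`. -/
def Tms (r : ℕ) (w₁ w₂ w₃ : ZMod r) : Multiset (ZMod r) :=
  (((Finset.range r ×ˢ Finset.range r ×ˢ Finset.range r).filter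
      (fun p : ℕ × ℕ × ℕ =>
        w₁ * ((p.1 : ZMod r) + 1) + w₂ * ((p.2.1 : ZMod r) + 1) + w₃ * (p.2.2 : ZMod r) = 0 ∧
        r ≤ (-w₂⁻¹ * w₁ * ((p.1 : ZMod r) + 1)).val
            + (-w₂⁻¹ * w₃ * (p.2.2 : ZMod r) - 1).val)).val).map
    fun p : ℕ × ℕ × ℕ => ((p.1 + p.2.1 + p.2.2 + 2 : ℕ) : ZMod r)

/-!
Solving the linear condition for the triple in terms of `a = -w₂⁻¹ w₁ (t₁ + 1)` and
`c = -w₂⁻¹ w₃ t₃ - 1` turns the inequality into "the addition `a + c` carries", and the length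
into `α a + β (c + 1)` with `α = 1 - w₂ w₁⁻¹`, `β = 1 - w₂ w₃⁻¹`. For a fixed length `v` the
admissible pairs lie on the graph `c = e + g a` of an affine map in which `g` and `1 + g` are
units; this is where the distinctness of the weights enters. Summing
`a.val + c.val = (a + c).val + r · [carry]` over that graph, all three sums of values equal
`∑ x.val`, since `a ↦ c` and `a ↦ a + c` are bijections. So every `v` occurs exactly
`(∑ x.val) / r` times in `T(w)`, whatever `w` is.
-/

open Finset

theorem Fintype.sum_comp_add_mul {R M : Type*} [Ring R] [Fintype R] [AddCommMonoid M]
    (f : R → M) (c : R) {d : R} (hd : IsUnit d) : ∑ a, f (c + d * a) = ∑ x, f x :=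
  Fintype.sum_bijective (fun a => c + d * a)
    ((Equiv.addLeft c).bijective.comp (Units.mulLeft hd.unit).bijective) _ _ fun _ => rfl

namespace ZMod

variable {r : ℕ}

theorem map_valEmbedding_univ [NeZero r] :
    (univ : Finset (ZMod r)).map ⟨val, val_injective r⟩ = range r := by
  ext t
  simp only [mem_map, mem_univ, true_and, Function.Embedding.coeFn_mk, mem_range]
  exact ⟨fun ⟨x, hx⟩ => hx ▸ x.val_lt, fun h => ⟨t, val_natCast_of_lt h⟩⟩

theorem val_add_val_eq_val_add_ite [NeZero r] (x y : ZMod r) :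
    x.val + y.val = (x + y).val + if r ≤ x.val + y.val then r else 0 := by
  split_ifs with h
  · exact val_add_val_of_le h
  · rw [val_add_of_lt (not_le.mp h), add_zero]

theorem card_carry_affine_mul [NeZero r] (e : ZMod r) {g : ZMod r} (hg : IsUnit g)
    (hg1 : IsUnit (1 + g)) :
    #{a | r ≤ a.val + (e + g * a).val} * r = ∑ x : ZMod r, x.val := by
  have hsplit : ∑ a : ZMod r, (a.val + (e + g * a).val)
      = ∑ a : ZMod r, ((e + (1 + g) * a).val + if r ≤ a.val + (e + g * a).val then r else 0) :=
    sum_congr rfl fun a _ => (val_add_val_eq_val_add_ite _ _).trans <| by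
      rw [show a + (e + g * a) = e + (1 + g) * a by ring]
  rw [sum_add_distrib, sum_add_distrib, Fintype.sum_comp_add_mul val e hg,
    Fintype.sum_comp_add_mul val e hg1, ← sum_filter, sum_const, smul_eq_mul] at hsplit
  omega

def carryPairs (r : ℕ) [NeZero r] : Finset (ZMod r × ZMod r) :=
  {y | r ≤ y.1.val + y.2.val}

theorem count_map_carryPairs_mul [Fact r.Prime] {α β : ZMod r} (hα : α ≠ 0) (hβ : β ≠ 0)
    (hαβ : α ≠ β) (v : ZMod r) :
    ((carryPairs r).val.map fun y => α * y.1 + β * (y.2 + 1)).count v * r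
      = ∑ x : ZMod r, x.val := by
  have hsolve : ∀ a c : ZMod r,
      v = α * a + β * (c + 1) ↔ c = β⁻¹ * (v - β) + -(β⁻¹ * α) * a := fun a c => by
    constructor
    · rintro rfl; field_simp; ring
    · rintro rfl; field_simp; ring
  have hg : IsUnit (-(β⁻¹ * α)) := (IsUnit.mk0 _ (mul_ne_zero (inv_ne_zero hβ) hα)).neg
  have hg1 : IsUnit (1 + -(β⁻¹ * α)) := by
    rw [show 1 + -(β⁻¹ * α) = β⁻¹ * (β - α) by field_simp; ring]
    exact IsUnit.mk0 _ (mul_ne_zero (inv_ne_zero hβ) (sub_ne_zero.2 hαβ.symm))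
  rw [← card_carry_affine_mul (β⁻¹ * (v - β)) hg hg1, Multiset.count_map, ← filter_val,
    card_val]
  congr 1
  refine card_nbij' Prod.fst (fun a => (a, β⁻¹ * (v - β) + -(β⁻¹ * α) * a)) ?_ ?_ ?_ ?_
  · rintro ⟨a, c⟩ h
    simp only [coe_filter, carryPairs, mem_filter, mem_univ, true_and, Set.mem_ofPred_eq] at h ⊢
    rw [← (hsolve a c).1 h.2]
    exact h.1
  · intro a h
    simp only [coe_filter, carryPairs, mem_filter, mem_univ, true_and, Set.mem_ofPred_eq] at h ⊢
    exact ⟨h, (hsolve _ _).2 rfl⟩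
  · rintro ⟨a, c⟩ h
    simp only [coe_filter, carryPairs, mem_filter, mem_univ, true_and, Set.mem_ofPred_eq] at h
    exact Prod.ext rfl ((hsolve a c).1 h.2).symm
  · intro a _
    rfl

end ZMod

theorem Tms_eq_map_filter_univ {r : ℕ} [NeZero r] (w₁ w₂ w₃ : ZMod r) :
    Tms r w₁ w₂ w₃ =
      ((univ : Finset (ZMod r × ZMod r × ZMod r)).filter fun x =>
        w₁ * (x.1 + 1) + w₂ * (x.2.1 + 1) + w₃ * x.2.2 = 0 ∧
        r ≤ (-w₂⁻¹ * w₁ * (x.1 + 1)).val + (-w₂⁻¹ * w₃ * x.2.2 - 1).val).val.map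
        fun x => x.1 + x.2.1 + x.2.2 + 2 := by
  let valEmb : ZMod r ↪ ℕ := ⟨ZMod.val, ZMod.val_injective r⟩
  have hcube : range r ×ˢ range r ×ˢ range r
      = univ.map (valEmb.prodMap (valEmb.prodMap valEmb)) := by
    rw [← univ_product_univ, prodMap_map_product, ← univ_product_univ, prodMap_map_product,
      ZMod.map_valEmbedding_univ]
  rw [Tms, hcube, filter_map, map_val, Multiset.map_map]
  simp [valEmb, Function.comp_def]

theorem Tms_eq_map_carryPairs {r : ℕ} [Fact r.Prime] {w₁ w₂ w₃ : ZMod r}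
    (h₁ : w₁ ≠ 0) (h₂ : w₂ ≠ 0) (h₃ : w₃ ≠ 0) :
    Tms r w₁ w₂ w₃ = (ZMod.carryPairs r).val.map
      fun y => (1 - w₂ * w₁⁻¹) * y.1 + (1 - w₂ * w₃⁻¹) * (y.2 + 1) := by
  let φ : ZMod r × ZMod r × ZMod r → ZMod r × ZMod r :=
    fun x => (-w₂⁻¹ * w₁ * (x.1 + 1), -w₂⁻¹ * w₃ * x.2.2 - 1)
  let ψ : ZMod r × ZMod r → ZMod r × ZMod r × ZMod r :=
    fun y => (-w₁⁻¹ * w₂ * y.1 - 1, y.1 + y.2, -w₃⁻¹ * w₂ * (y.2 + 1))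
  have hφψ : ∀ y, φ (ψ y) = y := by
    rintro ⟨a, c⟩
    simp only [φ, ψ, Prod.mk.injEq]
    constructor <;> field_simp <;> ring
  have hψφ : ∀ x, w₁ * (x.1 + 1) + w₂ * (x.2.1 + 1) + w₃ * x.2.2 = 0 → ψ (φ x) = x := by
    rintro ⟨x₁, x₂, x₃⟩ hx
    simp only [φ, ψ, Prod.mk.injEq]
    refine ⟨by field_simp; ring, ?_, by field_simp; ring⟩
    field_simp
    linear_combination -hx
  have hsolutions : ((univ : Finset (ZMod r × ZMod r × ZMod r)).filter fun x =>
        w₁ * (x.1 + 1) + w₂ * (x.2.1 + 1) + w₃ * x.2.2 = 0 ∧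
        r ≤ (-w₂⁻¹ * w₁ * (x.1 + 1)).val + (-w₂⁻¹ * w₃ * x.2.2 - 1).val)
      = (ZMod.carryPairs r).map ⟨ψ, Function.LeftInverse.injective hφψ⟩ := by
    ext x
    simp only [mem_filter, mem_univ, true_and, mem_map, ZMod.carryPairs,
      Function.Embedding.coeFn_mk]
    constructor
    · rintro ⟨hx, hcarry⟩
      exact ⟨φ x, hcarry, hψφ x hx⟩
    · rintro ⟨y, hy, rfl⟩
      refine ⟨by simp only [ψ]; field_simp; ring, ?_⟩
      show r ≤ (φ (ψ y)).1.val + (φ (ψ y)).2.val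
      rwa [hφψ]
  rw [Tms_eq_map_filter_univ, hsolutions, map_val, Multiset.map_map]
  congr 1
  funext y
  simp only [ψ, Function.comp_apply, Function.Embedding.coeFn_mk]
  field_simp
  ring

theorem count_Tms_mul {r : ℕ} [Fact r.Prime] {w₁ w₂ w₃ : ZMod r}
    (h₁ : w₁ ≠ 0) (h₂ : w₂ ≠ 0) (h₃ : w₃ ≠ 0)
    (h₁₂ : w₁ ≠ w₂) (h₁₃ : w₁ ≠ w₃) (h₂₃ : w₂ ≠ w₃) (v : ZMod r) :
    (Tms r w₁ w₂ w₃).count v * r = ∑ x : ZMod r, x.val := by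
  rw [Tms_eq_map_carryPairs h₁ h₂ h₃]
  refine ZMod.count_map_carryPairs_mul ?_ ?_ ?_ v
  · exact sub_ne_zero.2 fun h => h₁₂ ((mul_inv_eq_one₀ h₁).1 h.symm).symm
  · exact sub_ne_zero.2 fun h => h₂₃ ((mul_inv_eq_one₀ h₃).1 h.symm)
  · exact fun h => h₁₃ (inv_injective (mul_left_cancel₀ h₂ (sub_right_injective h)))

theorem stmt_18 (r : ℕ) (hr : r.Prime)
    (m₁ m₂ m₃ n₁ n₂ n₃ : ZMod r)
    (hm₁ : IsUnit m₁) (hm₂ : IsUnit m₂) (hm₃ : IsUnit m₃)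
    (hn₁ : IsUnit n₁) (hn₂ : IsUnit n₂) (hn₃ : IsUnit n₃)
    (hm12 : m₁ ≠ m₂) (hm13 : m₁ ≠ m₃) (hm23 : m₂ ≠ m₃)
    (hn12 : n₁ ≠ n₂) (hn13 : n₁ ≠ n₃) (hn23 : n₂ ≠ n₃) :
    Tms r m₁ m₂ m₃ = Tms r n₁ n₂ n₃ := by
  have : Fact r.Prime := ⟨hr⟩
  ext v
  refine Nat.eq_of_mul_eq_mul_right hr.pos ?_
  rw [count_Tms_mul hm₁.ne_zero hm₂.ne_zero hm₃.ne_zero hm12 hm13 hm23,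
    count_Tms_mul hn₁.ne_zero hn₂.ne_zero hn₃.ne_zero hn12 hn13 hn23]
end
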